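/- arXiv:1211.2182 — 3 statements merged into one kernel-verified Lean document; each statement's English description precedes it below -/
import Mathlib

section
/- Let χ be a primitive Dirichlet character mod q, let h be a positive integer, and let α, β, γ, δ, s be complex numbers with |Re α|, |Re β|, |Re γ|, |Re δ| < 1/4 and Re s > −1/2, and assume p^{−γ} ≠ χ̄(p) p^{−δ} for every prime p | h. Then for every prime p | h the series Σ_{j≥0} f_{α,β}(p^j,χ) f_{γ,δ}(p^{h_p+j},χ̄) p^{−j(1+s)} and Σ_{j≥0} f_{α,β}(p^j,χ) f_{γ,δ}(p^j,χ̄) p^{−j(1+s)} converge absolutely, the latter is nonzero, and B_{α,β,γ,δ,h}(s,χ̄) := ∏_{p|h} [Σ_{j≥0} f_{α,β}(p^j,χ) f_{γ,δ}(p^{h_p+j},χ̄) p^{−j(1+s)}]/[Σ_{j≥0} f_{α,β}(p^j,χ) f_{γ,δ}(p^j,χ̄) p^{−j(1+s)}] = ∏_{p|h} (B⁰ − p^{−1}B¹ + p^{−2}B²)/[(p^{−γ} − χ̄(p)p^{−δ})(1 − χ(p)χ̄(p) p^{−2−α−β−γ−δ−2s})], where (with m := h_p) B⁰ = p^{−γ(m+1)}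 − χ̄(p)^{m+1} p^{−δ(m+1)}, B¹ = χ̄(p) p^{−γ−δ}(p^{−α} + χ(p)p^{−β})(p^{−γm} − χ̄(p)^m p^{−δm}) p^{−s}, B² = χ(p)χ̄(p) p^{−α−β−γ−δ}(χ̄(p) p^{−δ−γm} − χ̄(p)^m p^{−γ−δm}) p^{−2s}. -/
open Complex MeasureTheory Filter Topology

noncomputable section

/-- `e_d(c) = exp(2πi c/d)`. -/
def eC (d : ℕ) (c : ℤ) : ℂ := Complex.exp (2 * Real.pi * Complex.I * c / d)

/-- The conjugate Dirichlet character. -/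
def conjChar {q : ℕ} (χ : DirichletCharacter ℂ q) : DirichletCharacter ℂ q :=
  χ.ringHomComp (starRingEnd ℂ)

/-- Gauss sum `G(χ) = Σ_{m=1}^{q} χ(m) e_q(m)` (here summed over `m < q`, which is the same). -/
def gaussC {q : ℕ} (χ : DirichletCharacter ℂ q) : ℂ :=
  ∑ m ∈ Finset.range q, χ (m : ZMod q) * eC q m

/-- `f_{α,β}(n,χ) = Σ_{n₁n₂=n} n₁^{-α} n₂^{-β} χ(n₂)`. -/
def fab {q : ℕ} (χ : DirichletCharacter ℂ q) (α β : ℂ) (n : ℕ) : ℂ :=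
  ∑ d ∈ n.divisors, ((n / d : ℕ) : ℂ) ^ (-α) * (d : ℂ) ^ (-β) * χ (d : ZMod q)

/-- `σ_{α,β}(n) = Σ_{n₁n₂=n} n₁^{-α} n₂^{-β}`. -/
def sigmaab (α β : ℂ) (n : ℕ) : ℂ :=
  ∑ d ∈ n.divisors, ((n / d : ℕ) : ℂ) ^ (-α) * (d : ℂ) ^ (-β)

/-- the `q`-part `n(q)` of `n`. -/
def qPart (q n : ℕ) : ℕ := ∏ p ∈ n.primeFactors.filter (· ∣ q), p ^ (n.factorization p)

/-- local Euler factor quotient `B_{α,β,γ,δ,h}(s)`, with `χ₁` attached to `(α,β)` and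
`χ₂` attached to `(γ,δ)` (the shifted one). -/
def Bh {q : ℕ} (χ₁ χ₂ : DirichletCharacter ℂ q) (α β γ δ : ℂ) (h : ℕ) (s : ℂ) : ℂ :=
  ∏ p ∈ h.primeFactors,
    (∑' j : ℕ, fab χ₁ α β (p ^ j) * fab χ₂ γ δ (p ^ (h.factorization p + j)) *
        (p : ℂ) ^ (-((j : ℂ) * (1 + s)))) /
    (∑' j : ℕ, fab χ₁ α β (p ^ j) * fab χ₂ γ δ (p ^ j) * (p : ℂ) ^ (-((j : ℂ) * (1 + s))))

/-- `B_{α,β,γ,δ,h,k}(s) = B_{α,β,γ,δ,h}(s,χ̄) B_{γ,δ,α,β,k}(s,χ)`. -/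
def Bfull {q : ℕ} (χ : DirichletCharacter ℂ q) (α β γ δ : ℂ) (h k : ℕ) (s : ℂ) : ℂ :=
  Bh χ (conjChar χ) α β γ δ h s * Bh (conjChar χ) χ γ δ α β k s

/-- `A_{α,β,γ,δ}(s)`. -/
def Az {q : ℕ} [NeZero q] (χ : DirichletCharacter ℂ q) (α β γ δ : ℂ) (s : ℂ) : ℂ :=
  riemannZeta (1 + α + γ + s) * riemannZeta (1 + β + δ + s) *
    DirichletCharacter.LFunction χ (1 + β + γ + s) *
    DirichletCharacter.LFunction (conjChar χ) (1 + α + δ + s) /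
    riemannZeta (2 + α + β + γ + δ + 2 * s) *
    ∏ p ∈ q.primeFactors,
      (1 - (p : ℂ) ^ (-1 - s - β - δ)) / (1 - (p : ℂ) ^ (-2 - 2 * s - α - β - γ - δ))

/-- `Z_{α,β,γ,δ,h,k}(s) = A_{α,β,γ,δ}(s) B_{α,β,γ,δ,h,k}(s)`. -/
def Zfull {q : ℕ} [NeZero q] (χ : DirichletCharacter ℂ q) (α β γ δ : ℂ) (h k : ℕ) (s : ℂ) : ℂ :=
  Az χ α β γ δ s * Bfull χ α β γ δ h k s

/-- `A′_{α,β,γ,δ}(s,χ)`. -/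
def A'z {q : ℕ} [NeZero q] (χ : DirichletCharacter ℂ q) (α β γ δ : ℂ) (s : ℂ) : ℂ :=
  DirichletCharacter.LFunction χ (1 + α + γ + s) * DirichletCharacter.LFunction χ (1 + β + δ + s) *
    DirichletCharacter.LFunction χ (1 + α + δ + s) * DirichletCharacter.LFunction χ (1 + β + γ + s) /
    DirichletCharacter.LFunction (χ ^ 2) (2 + α + β + γ + δ + 2 * s)

/-- `B′_{α,β,γ,δ,h}(s,χ)`. -/
def B'h {q : ℕ} (χ : DirichletCharacter ℂ q) (α β γ δ : ℂ) (h : ℕ) (s : ℂ) : ℂ :=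
  ∏ p ∈ h.primeFactors,
    (∑' j : ℕ, (χ (p : ZMod q)) ^ j * sigmaab α β (p ^ j) * sigmaab γ δ (p ^ (h.factorization p + j)) *
        (p : ℂ) ^ (-((j : ℂ) * (1 + s)))) /
    (∑' j : ℕ, (χ (p : ZMod q)) ^ j * sigmaab α β (p ^ j) * sigmaab γ δ (p ^ j) *
        (p : ℂ) ^ (-((j : ℂ) * (1 + s))))

/-- `B′_{α,β,γ,δ,h,k}(s,χ) = B′_{α,β,γ,δ,h}(s,χ) B′_{γ,δ,α,β,k}(s,χ)`. -/
def B'full {q : ℕ} (χ : DirichletCharacter ℂ q) (α β γ δ : ℂ) (h k : ℕ) (s : ℂ) : ℂ :=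
  B'h χ α β γ δ h s * B'h χ γ δ α β k s

/-- `Z′_{α,β,γ,δ,h,k}(s,χ) = conj(G(χ)) A′_{α,β,γ,δ}(s,χ) B′_{α,β,γ,δ,h,k}(s,χ)`. -/
def Z'full {q : ℕ} [NeZero q] (χ : DirichletCharacter ℂ q) (α β γ δ : ℂ) (h k : ℕ) (s : ℂ) : ℂ :=
  (starRingEnd ℂ) (gaussC χ) * A'z χ α β γ δ s * B'full χ α β γ δ h k s

/-- `𝔞 = 0` if `χ(-1) = 1`, else `1`. -/
def frakA {q : ℕ} (χ : DirichletCharacter ℂ q) : ℕ := if χ (-1) = 1 then 0 else 1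

/-- the Gamma-factor ratio `g_{α,β,γ,δ}(s,t)`. -/
def gfun {q : ℕ} (χ : DirichletCharacter ℂ q) (α β γ δ : ℂ) (s : ℂ) (t : ℝ) : ℂ :=
  (Complex.Gamma ((1 / 2 + α + s + Complex.I * t) / 2) *
      Complex.Gamma ((1 / 2 + β + s + Complex.I * t + (frakA χ : ℂ)) / 2) *
      Complex.Gamma ((1 / 2 + γ + s - Complex.I * t) / 2) *
      Complex.Gamma ((1 / 2 + δ + s - Complex.I * t + (frakA χ : ℂ)) / 2)) /
    (Complex.Gamma ((1 / 2 + α + Complex.I * t) / 2) *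
      Complex.Gamma ((1 / 2 + β + Complex.I * t + (frakA χ : ℂ)) / 2) *
      Complex.Gamma ((1 / 2 + γ - Complex.I * t) / 2) *
      Complex.Gamma ((1 / 2 + δ - Complex.I * t + (frakA χ : ℂ)) / 2))

/-- `X_{α,β,γ,δ,t}`. -/
def Xfun {q : ℕ} (χ : DirichletCharacter ℂ q) (α β γ δ : ℂ) (t : ℝ) : ℂ :=
  (Real.pi : ℂ) ^ (α + β + γ + δ) * (q : ℂ) ^ (-β - δ) *
    (Complex.Gamma ((1 / 2 - α - Complex.I * t) / 2) *
      Complex.Gamma ((1 / 2 - β - Complex.I * t + (frakA χ : ℂ)) / 2) *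
      Complex.Gamma ((1 / 2 - γ + Complex.I * t) / 2) *
      Complex.Gamma ((1 / 2 - δ + Complex.I * t + (frakA χ : ℂ)) / 2)) /
    (Complex.Gamma ((1 / 2 + α + Complex.I * t) / 2) *
      Complex.Gamma ((1 / 2 + β + Complex.I * t + (frakA χ : ℂ)) / 2) *
      Complex.Gamma ((1 / 2 + γ - Complex.I * t) / 2) *
      Complex.Gamma ((1 / 2 + δ - Complex.I * t + (frakA χ : ℂ)) / 2))

/-- `V_{α,β,γ,δ,t}(x)`, as the contour integral along `Re s = 1`. -/
def Vfun {q : ℕ} (χ : DirichletCharacter ℂ q) (α β γ δ : ℂ) (G : ℂ → ℂ) (t : ℝ) (x : ℝ) : ℂ :=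
  (1 / (2 * Real.pi)) *
    ∫ u : ℝ, G (1 + Complex.I * u) / (1 + Complex.I * u) *
      gfun χ α β γ δ (1 + Complex.I * u) t * (x : ℂ) ^ (-(1 + Complex.I * u))

/-- the Ramanujan sum `c_d(r)`. -/
def cdR (d r : ℕ) : ℂ :=
  ∑ c ∈ (Finset.Icc 1 d).filter (fun c => Nat.gcd c d = 1), eC d (c * r)

/-- the twisted Ramanujan-type sum `c_d(r,χ) = Σ_{(c,d)=1} χ(c) e_d(-cr)`. -/
def cdChi {q : ℕ} (χ : DirichletCharacter ℂ q) (d r : ℕ) : ℂ :=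
  ∑ c ∈ (Finset.Icc 1 d).filter (fun c => Nat.gcd c d = 1),
    χ (c : ZMod q) * eC d (-((c : ℤ) * r))

/-- `σ_{α,β}(n, a/d, χ)`. -/
def sigmaE {q : ℕ} (χ : DirichletCharacter ℂ q) (α β : ℂ) (d : ℕ) (a : ℤ) (n : ℕ) : ℂ :=
  ∑ u ∈ n.divisors, (u : ℂ) ^ (-α) * ((n / u : ℕ) : ℂ) ^ (-β) *
    ∑ b ∈ Finset.Icc 1 (Nat.lcm d q),
      if ((b : ℕ) : ZMod d) = ((a * u : ℤ) : ZMod d)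
      then χ (b : ZMod q) * eC (Nat.lcm d q) b else 0

/-- local factor `C_{11,α,β,γ,δ,h}(s,ψ)`. -/
def C11h {q : ℕ} (ψ : DirichletCharacter ℂ q) (α β γ δ : ℂ) (h : ℕ) (s : ℂ) : ℂ :=
  ∏ p ∈ h.primeFactors.filter (fun p => ¬ p ∣ q),
    (let m : ℕ := h.factorization p
     ((1 - ψ (p : ZMod q) ^ (m + 1) * (p : ℂ) ^ (-(((m : ℂ) + 1) * (α + δ + 2 * s))))
      - (p : ℂ) ^ (-1 : ℂ) *
        ((ψ (p : ZMod q) * (p : ℂ) ^ (γ - δ) + (p : ℂ) ^ (-β - δ - 2 * s)) *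
          (1 - ψ (p : ZMod q) ^ m * (p : ℂ) ^ (-((m : ℂ) * (α + δ + 2 * s)))))
      + (p : ℂ) ^ (-2 : ℂ) *
        (ψ (p : ZMod q) * (p : ℂ) ^ (-β + γ - 2 * δ - 2 * s)
          - ψ (p : ZMod q) ^ m * (p : ℂ) ^ (-((m : ℂ) * (α + δ + 2 * s))) * (p : ℂ) ^ (α - β + γ - δ))) /
     ((1 - ψ (p : ZMod q) * (p : ℂ) ^ (-α - δ - 2 * s)) * (1 - (p : ℂ) ^ (-2 + α - β + γ - δ))))

/-- `C_{11,α,β,γ,δ,h,k}(s)`. -/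
def C11full {q : ℕ} (χ : DirichletCharacter ℂ q) (α β γ δ : ℂ) (h k : ℕ) (s : ℂ) : ℂ :=
  C11h (conjChar χ) α β γ δ h s * C11h χ γ δ α β k s

/-- local factor `C_{22,α,β,γ,δ,h}(s,ψ)`. -/
def C22h {q : ℕ} (ψ : DirichletCharacter ℂ q) (α β γ δ : ℂ) (h : ℕ) (s : ℂ) : ℂ :=
  ∏ p ∈ h.primeFactors.filter (fun p => ¬ p ∣ q),
    (let m : ℕ := h.factorization p
     (((p : ℂ) ^ (-((m : ℂ) * (β + γ + 2 * s))) - ψ (p : ZMod q) ^ (m + 1) * (p : ℂ) ^ (β + γ + 2 * s))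
      - (p : ℂ) ^ (-1 : ℂ) *
        (((p : ℂ) ^ (-((m : ℂ) * (β + γ + 2 * s))) - ψ (p : ZMod q) ^ m) *
          ((p : ℂ) ^ (β + δ + 2 * s) + ψ (p : ZMod q) * (p : ℂ) ^ (-α + β)))
      + (p : ℂ) ^ (-2 : ℂ) *
        ((p : ℂ) ^ (-((m : ℂ) * (β + γ + 2 * s))) * ψ (p : ZMod q) * (p : ℂ) ^ (-α + 2 * β + δ + 2 * s)
          - ψ (p : ZMod q) ^ m * (p : ℂ) ^ (-α + β - γ + δ))) /
     ((1 - ψ (p : ZMod q) * (p : ℂ) ^ (β + γ + 2 * s)) * (1 - (p : ℂ) ^ (-2 - α + β - γ + δ))))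

/-- `C_{22,α,β,γ,δ,h,k}(s)`. -/
def C22full {q : ℕ} (χ : DirichletCharacter ℂ q) (α β γ δ : ℂ) (h k : ℕ) (s : ℂ) : ℂ :=
  (qPart q h : ℂ) ^ (-β - γ - 2 * s) * (qPart q k : ℂ) ^ (-α - δ - 2 * s) *
    C22h (conjChar χ) α β γ δ h s * C22h χ γ δ α β k s

/-- local factor `C_{12,α,β,γ,δ,h}(s)`. -/
def C12h {q : ℕ} (χ : DirichletCharacter ℂ q) (α β γ δ : ℂ) (h : ℕ) (s : ℂ) : ℂ :=
  ∏ p ∈ h.primeFactors.filter (fun p => ¬ p ∣ q),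
    (let m : ℕ := h.factorization p
     ((1 - (p : ℂ) ^ (-(((m : ℂ) + 1) * (α + γ + 2 * s))))
      - (p : ℂ) ^ (-1 : ℂ) *
        (χ (p : ZMod q) * ((p : ℂ) ^ (δ - γ) + (p : ℂ) ^ (-β - γ - 2 * s)) *
          (1 - (p : ℂ) ^ (-((m : ℂ) * (α + γ + 2 * s)))))
      + (p : ℂ) ^ (-2 : ℂ) *
        (χ (p : ZMod q) ^ 2 * (p : ℂ) ^ (δ - β) *
          ((p : ℂ) ^ (-(2 * (γ + s))) - (p : ℂ) ^ (2 * (α + s)) * (p : ℂ) ^ (-(((m : ℂ) + 1) * (α + γ + 2 * s)))))) /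
     ((1 - (p : ℂ) ^ (-α - γ - 2 * s)) * (1 - χ (p : ZMod q) ^ 2 * (p : ℂ) ^ (-2 + α - β - γ + δ))))

/-- `C_{12,α,β,γ,δ,h,k}(s) = C_{12,α,β,γ,δ,h}(s) C_{12,δ,γ,β,α,k}(s)`. -/
def C12full {q : ℕ} (χ : DirichletCharacter ℂ q) (α β γ δ : ℂ) (h k : ℕ) (s : ℂ) : ℂ :=
  C12h χ α β γ δ h s * C12h χ δ γ β α k s

end

noncomputable section Stmt15Aux

open Finset in
/-- the basic geometric-type coefficient -/
def Fgeo (x y : ℂ) (j : ℕ) : ℂ := ∑ i ∈ Finset.range (j + 1), x ^ (j - i) * y ^ i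

lemma natpow_cpow {p : ℕ} (hp : 0 < p) (w : ℂ) (k : ℕ) :
    ((p ^ k : ℕ) : ℂ) ^ w = ((p : ℂ) ^ w) ^ k := by
  have hp0 : (p : ℂ) ≠ 0 := Nat.cast_ne_zero.mpr hp.ne'
  have hpk0 : ((p ^ k : ℕ) : ℂ) ≠ 0 := Nat.cast_ne_zero.mpr (pow_ne_zero k hp.ne')
  have hlog : Complex.log ((p ^ k : ℕ) : ℂ) = (k : ℂ) * Complex.log (p : ℂ) := by
    rw [← Complex.natCast_log, ← Complex.natCast_log]
    push_cast
    rw [Real.log_pow]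
    push_cast
    ring
  rw [Complex.cpow_def_of_ne_zero hpk0, Complex.cpow_def_of_ne_zero hp0, ← Complex.exp_nat_mul,
    hlog]
  ring_nf

lemma fab_eq {q : ℕ} (χ : DirichletCharacter ℂ q) (α β : ℂ) {p : ℕ} (hp : p.Prime) (j : ℕ) :
    fab χ α β (p ^ j) = Fgeo ((p : ℂ) ^ (-α)) (χ (p : ZMod q) * (p : ℂ) ^ (-β)) j := by
  rw [fab, Nat.sum_divisors_prime_pow hp, Fgeo]
  refine Finset.sum_congr rfl fun i hi => ?_
  have hij : i ≤ j := Nat.lt_succ_iff.mp (Finset.mem_range.mp hi)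
  have h1 : p ^ j / p ^ i = p ^ (j - i) := Nat.pow_div hij hp.pos
  have h2 : ((p ^ i : ℕ) : ZMod q) = ((p : ℕ) : ZMod q) ^ i := by push_cast; ring
  rw [h1, natpow_cpow hp.pos, natpow_cpow hp.pos, h2, map_pow, mul_pow]
  ring

lemma Fgeo_mul_pow (x y c : ℂ) (j : ℕ) :
    Fgeo x y j * c ^ j = ∑ i ∈ Finset.range (j + 1), (y * c) ^ i * (x * c) ^ (j - i) := by
  rw [Fgeo, Finset.sum_mul]
  refine Finset.sum_congr rfl fun i hi => ?_
  have hij : i ≤ j := Nat.lt_succ_iff.mp (Finset.mem_range.mp hi)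
  have hc : c ^ j = c ^ i * c ^ (j - i) := by rw [← pow_add, Nat.add_sub_cancel' hij]
  rw [hc, mul_pow, mul_pow]
  ring

lemma summable_Fgeo {x y c : ℂ} (hx : ‖x * c‖ < 1) (hy : ‖y * c‖ < 1) :
    Summable (fun j : ℕ => Fgeo x y j * c ^ j) := by
  have hf : Summable fun i : ℕ => ‖(y * c) ^ i‖ := by
    simpa [norm_pow] using summable_geometric_of_lt_one (norm_nonneg _) hy
  have hg : Summable fun i : ℕ => ‖(x * c) ^ i‖ := by
    simpa [norm_pow] using summable_geometric_of_lt_one (norm_nonneg _) hx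
  have := (summable_norm_sum_mul_range_of_summable_norm hf hg).of_norm
  refine this.congr fun j => ?_
  rw [Fgeo_mul_pow]

lemma tsum_Fgeo {x y c : ℂ} (hx : ‖x * c‖ < 1) (hy : ‖y * c‖ < 1) :
    ∑' j : ℕ, Fgeo x y j * c ^ j = (1 - x * c)⁻¹ * (1 - y * c)⁻¹ := by
  have hf : Summable fun i : ℕ => ‖(y * c) ^ i‖ := by
    simpa [norm_pow] using summable_geometric_of_lt_one (norm_nonneg _) hy
  have hg : Summable fun i : ℕ => ‖(x * c) ^ i‖ := by
    simpa [norm_pow] using summable_geometric_of_lt_one (norm_nonneg _) hx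
  have h := tsum_mul_tsum_eq_tsum_sum_range_of_summable_norm hf hg
  rw [tsum_geometric_of_norm_lt_one hy, tsum_geometric_of_norm_lt_one hx] at h
  calc ∑' j : ℕ, Fgeo x y j * c ^ j
      = ∑' n : ℕ, ∑ k ∈ Finset.range (n + 1), (y * c) ^ k * (x * c) ^ (n - k) :=
        tsum_congr fun j => Fgeo_mul_pow x y c j
    _ = (1 - y * c)⁻¹ * (1 - x * c)⁻¹ := h.symm
    _ = (1 - x * c)⁻¹ * (1 - y * c)⁻¹ := mul_comm _ _

lemma Fgeo_mul_sub (u v : ℂ) (n : ℕ) : Fgeo u v n * (u - v) = u ^ (n + 1) - v ^ (n + 1) := by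
  have h := geom_sum₂_mul v u (n + 1)
  have hG : Fgeo u v n = ∑ i ∈ Finset.range (n + 1), v ^ i * u ^ (n + 1 - 1 - i) := by
    rw [Fgeo]
    refine Finset.sum_congr rfl fun i hi => ?_
    rw [Nat.add_sub_cancel]
    ring
  rw [hG, show u - v = -(v - u) by ring, mul_neg, h]
  ring

lemma one_sub_ne_zero_of_norm_lt_one {z : ℂ} (hz : ‖z‖ < 1) : 1 - z ≠ 0 := by
  intro h
  have : z = 1 := by linear_combination -h
  rw [this] at hz
  simp at hz

lemma norm_mul_lt_one {c z : ℂ} (hc : ‖c‖ ≤ 1) (hz : ‖z‖ < 1) : ‖c * z‖ < 1 := by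
  rw [norm_mul]
  calc ‖c‖ * ‖z‖ ≤ 1 * ‖z‖ := mul_le_mul_of_nonneg_right hc (norm_nonneg _)
    _ = ‖z‖ := one_mul _
    _ < 1 := hz

lemma key_term (x y u v t : ℂ) (huv : u - v ≠ 0) (m j : ℕ) :
    Fgeo x y j * Fgeo u v (m + j) * t ^ j
      = (u - v)⁻¹ * (u ^ (m + 1) * (Fgeo x y j * (u * t) ^ j)
          - v ^ (m + 1) * (Fgeo x y j * (v * t) ^ j)) := by
  rw [inv_mul_eq_div, eq_div_iff huv]
  have h := Fgeo_mul_sub u v (m + j)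
  calc Fgeo x y j * Fgeo u v (m + j) * t ^ j * (u - v)
      = Fgeo x y j * t ^ j * (Fgeo u v (m + j) * (u - v)) := by ring
    _ = Fgeo x y j * t ^ j * (u ^ (m + j + 1) - v ^ (m + j + 1)) := by rw [h]
    _ = Fgeo x y j * t ^ j * (u ^ ((m + 1) + j) - v ^ ((m + 1) + j)) := by
        rw [show m + j + 1 = (m + 1) + j by omega]
    _ = u ^ (m + 1) * (Fgeo x y j * (u * t) ^ j) - v ^ (m + 1) * (Fgeo x y j * (v * t) ^ j) := by
        rw [pow_add, pow_add, mul_pow, mul_pow]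
        ring

lemma core_summable {x y u v t : ℂ} (h1 : ‖x * (u * t)‖ < 1) (h2 : ‖y * (u * t)‖ < 1)
    (h3 : ‖x * (v * t)‖ < 1) (h4 : ‖y * (v * t)‖ < 1) (huv : u - v ≠ 0) (m : ℕ) :
    Summable (fun j : ℕ => Fgeo x y j * Fgeo u v (m + j) * t ^ j) := by
  have hA := summable_Fgeo h1 h2
  have hB := summable_Fgeo h3 h4
  refine ((( hA.mul_left (u ^ (m + 1))).sub (hB.mul_left (v ^ (m + 1)))).mul_left
    (u - v)⁻¹).congr fun j => ?_
  exact (key_term x y u v t huv m j).symm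

lemma core_tsum {x y u v t : ℂ} (h1 : ‖x * (u * t)‖ < 1) (h2 : ‖y * (u * t)‖ < 1)
    (h3 : ‖x * (v * t)‖ < 1) (h4 : ‖y * (v * t)‖ < 1) (huv : u - v ≠ 0) (m : ℕ) :
    ∑' j : ℕ, Fgeo x y j * Fgeo u v (m + j) * t ^ j
      = (u - v)⁻¹ * (u ^ (m + 1) * ((1 - x * (u * t))⁻¹ * (1 - y * (u * t))⁻¹)
          - v ^ (m + 1) * ((1 - x * (v * t))⁻¹ * (1 - y * (v * t))⁻¹)) := by
  have hA := summable_Fgeo h1 h2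
  have hB := summable_Fgeo h3 h4
  calc ∑' j : ℕ, Fgeo x y j * Fgeo u v (m + j) * t ^ j
      = ∑' j : ℕ, (u - v)⁻¹ * (u ^ (m + 1) * (Fgeo x y j * (u * t) ^ j)
          - v ^ (m + 1) * (Fgeo x y j * (v * t) ^ j)) := by
        exact tsum_congr fun j => key_term x y u v t huv m j
    _ = (u - v)⁻¹ * ((u ^ (m + 1) * ∑' j : ℕ, Fgeo x y j * (u * t) ^ j)
          - v ^ (m + 1) * ∑' j : ℕ, Fgeo x y j * (v * t) ^ j) := by
        rw [tsum_mul_left, Summable.tsum_sub (hA.mul_left _) (hB.mul_left _), tsum_mul_left, tsum_mul_left]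
    _ = _ := by rw [tsum_Fgeo h1 h2, tsum_Fgeo h3 h4]

end Stmt15Aux

noncomputable section Stmt15Main

lemma alg1 {U V A B C D X : ℂ} (hUV : U - V ≠ 0) (hA : A ≠ 0) (hB : B ≠ 0) (hC : C ≠ 0)
    (hD : D ≠ 0) (hrel : U * (C * D) - V * (A * B) = (U - V) * X) :
    (U - V)⁻¹ * (U ^ 1 * (A⁻¹ * B⁻¹) - V ^ 1 * (C⁻¹ * D⁻¹)) = X * (A⁻¹ * (B⁻¹ * (C⁻¹ * D⁻¹))) := by
  have hAA := mul_inv_cancel₀ hA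
  have hBB := mul_inv_cancel₀ hB
  have hCC := mul_inv_cancel₀ hC
  have hDD := mul_inv_cancel₀ hD
  have hWW := mul_inv_cancel₀ hUV
  linear_combination (U - V)⁻¹ * (A⁻¹ * (B⁻¹ * (C⁻¹ * D⁻¹))) * hrel
    + X * (A⁻¹ * (B⁻¹ * (C⁻¹ * D⁻¹))) * hWW
    + (U - V)⁻¹ * (-U * A⁻¹ * B⁻¹) * hCC + (U - V)⁻¹ * (-U * A⁻¹ * B⁻¹ * C * C⁻¹) * hDD
    + (U - V)⁻¹ * (V * C⁻¹ * D⁻¹) * hAA + (U - V)⁻¹ * (V * C⁻¹ * D⁻¹ * A * A⁻¹) * hBB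

set_option maxHeartbeats 2000000 in
lemma perprime {q : ℕ} (χ₁ χ₂ : DirichletCharacter ℂ q) (α β γ δ s : ℂ)
    (hα : |α.re| < 1 / 4) (hβ : |β.re| < 1 / 4) (hγ : |γ.re| < 1 / 4) (hδ : |δ.re| < 1 / 4)
    (hs : -(1 / 2 : ℝ) < s.re) {p : ℕ} (hp : p.Prime)
    (hnd : (p : ℂ) ^ (-γ) ≠ χ₂ (p : ZMod q) * (p : ℂ) ^ (-δ)) :
    (∀ m : ℕ, Summable (fun j : ℕ => fab χ₁ α β (p ^ j) * fab χ₂ γ δ (p ^ (m + j)) *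
        (p : ℂ) ^ (-((j : ℂ) * (1 + s))))) ∧
    Summable (fun j : ℕ => fab χ₁ α β (p ^ j) * fab χ₂ γ δ (p ^ j) *
        (p : ℂ) ^ (-((j : ℂ) * (1 + s)))) ∧
    (∑' j : ℕ, fab χ₁ α β (p ^ j) * fab χ₂ γ δ (p ^ j) * (p : ℂ) ^ (-((j : ℂ) * (1 + s)))) ≠ 0 ∧
    ∀ m : ℕ,
    (∑' j : ℕ, fab χ₁ α β (p ^ j) * fab χ₂ γ δ (p ^ (m + j)) * (p : ℂ) ^ (-((j : ℂ) * (1 + s)))) /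
    (∑' j : ℕ, fab χ₁ α β (p ^ j) * fab χ₂ γ δ (p ^ j) * (p : ℂ) ^ (-((j : ℂ) * (1 + s))))
      = ((((p : ℂ) ^ (-γ * ((m : ℂ) + 1)) -
            χ₂ (p : ZMod q) ^ (m + 1) * (p : ℂ) ^ (-δ * ((m : ℂ) + 1)))
          - (p : ℂ) ^ (-1 : ℂ) *
            (χ₂ (p : ZMod q) * (p : ℂ) ^ (-γ - δ) *
              ((p : ℂ) ^ (-α) + χ₁ (p : ZMod q) * (p : ℂ) ^ (-β)) *
              ((p : ℂ) ^ (-γ * (m : ℂ)) - χ₂ (p : ZMod q) ^ m * (p : ℂ) ^ (-δ * (m : ℂ))) *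
              (p : ℂ) ^ (-s))
          + (p : ℂ) ^ (-2 : ℂ) *
            (χ₁ (p : ZMod q) * χ₂ (p : ZMod q) * (p : ℂ) ^ (-α - β - γ - δ) *
              (χ₂ (p : ZMod q) * (p : ℂ) ^ (-δ - γ * (m : ℂ)) -
                χ₂ (p : ZMod q) ^ m * (p : ℂ) ^ (-γ - δ * (m : ℂ))) *
              (p : ℂ) ^ (-(2 * s)))) /
        (((p : ℂ) ^ (-γ) - χ₂ (p : ZMod q) * (p : ℂ) ^ (-δ)) *
          (1 - χ₁ (p : ZMod q) * χ₂ (p : ZMod q) *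
            (p : ℂ) ^ (-2 - α - β - γ - δ - 2 * s)))) := by
  have hP0 : (p : ℂ) ≠ 0 := Nat.cast_ne_zero.mpr hp.pos.ne'
  have hp1 : (1 : ℝ) < (p : ℝ) := by exact_mod_cast hp.one_lt
  rw [abs_lt] at hα hβ hγ hδ
  have normlt : ∀ w : ℂ, w.re < 0 → ‖(p : ℂ) ^ w‖ < 1 := fun w hw => by
    rw [Complex.norm_natCast_cpow_of_pos hp.pos]
    exact Real.rpow_lt_one_of_one_lt_of_neg hp1 hw
  have key3 : ∀ w1 w2 : ℂ, w1.re < 1 / 4 → w2.re < 1 / 4 →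
      ‖(p : ℂ) ^ w1 * ((p : ℂ) ^ w2 * (p : ℂ) ^ (-(1 + s)))‖ < 1 := by
    intro w1 w2 hw1 hw2
    rw [← Complex.cpow_add _ _ hP0, ← Complex.cpow_add _ _ hP0]
    apply normlt
    simp only [Complex.add_re, Complex.neg_re, Complex.one_re]
    linarith
  have hc1 : ‖χ₁ (p : ZMod q)‖ ≤ 1 := DirichletCharacter.norm_le_one χ₁ _
  have hc2 : ‖χ₂ (p : ZMod q)‖ ≤ 1 := DirichletCharacter.norm_le_one χ₂ _
  have hc12 : ‖χ₁ (p : ZMod q) * χ₂ (p : ZMod q)‖ ≤ 1 := by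
    rw [norm_mul]
    exact mul_le_one₀ hc1 (norm_nonneg _) hc2
  have h1 : ‖((p : ℂ) ^ (-α)) * (((p : ℂ) ^ (-γ)) * ((p : ℂ) ^ (-(1 + s))))‖ < 1 :=
    key3 (-α) (-γ) (by rw [Complex.neg_re]; linarith [hα.1]) (by rw [Complex.neg_re]; linarith [hγ.1])
  have h2 : ‖(χ₁ (p : ZMod q) * (p : ℂ) ^ (-β)) * (((p : ℂ) ^ (-γ)) * ((p : ℂ) ^ (-(1 + s))))‖ < 1 := by
    rw [show (χ₁ (p : ZMod q) * (p : ℂ) ^ (-β)) * (((p : ℂ) ^ (-γ)) * ((p : ℂ) ^ (-(1 + s)))) = χ₁ (p : ZMod q) * ((p : ℂ) ^ (-β) * ((p : ℂ) ^ (-γ) * ((p : ℂ) ^ (-(1 + s))))) by ring]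
    exact norm_mul_lt_one hc1 (key3 (-β) (-γ) (by rw [Complex.neg_re]; linarith [hβ.1])
      (by rw [Complex.neg_re]; linarith [hγ.1]))
  have h3 : ‖((p : ℂ) ^ (-α)) * ((χ₂ (p : ZMod q) * (p : ℂ) ^ (-δ)) * ((p : ℂ) ^ (-(1 + s))))‖ < 1 := by
    rw [show ((p : ℂ) ^ (-α)) * ((χ₂ (p : ZMod q) * (p : ℂ) ^ (-δ)) * ((p : ℂ) ^ (-(1 + s)))) = χ₂ (p : ZMod q) * ((p : ℂ) ^ (-α) * ((p : ℂ) ^ (-δ) * ((p : ℂ) ^ (-(1 + s))))) by ring]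
    exact norm_mul_lt_one hc2 (key3 (-α) (-δ) (by rw [Complex.neg_re]; linarith [hα.1])
      (by rw [Complex.neg_re]; linarith [hδ.1]))
  have h4 : ‖(χ₁ (p : ZMod q) * (p : ℂ) ^ (-β)) * ((χ₂ (p : ZMod q) * (p : ℂ) ^ (-δ)) * ((p : ℂ) ^ (-(1 + s))))‖ < 1 := by
    rw [show (χ₁ (p : ZMod q) * (p : ℂ) ^ (-β)) * ((χ₂ (p : ZMod q) * (p : ℂ) ^ (-δ)) * ((p : ℂ) ^ (-(1 + s)))) = (χ₁ (p : ZMod q) * χ₂ (p : ZMod q)) * ((p : ℂ) ^ (-β) * ((p : ℂ) ^ (-δ) * ((p : ℂ) ^ (-(1 + s))))) by ring]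
    exact norm_mul_lt_one hc12 (key3 (-β) (-δ) (by rw [Complex.neg_re]; linarith [hβ.1])
      (by rw [Complex.neg_re]; linarith [hδ.1]))
  have huv : ((p : ℂ) ^ (-γ)) - (χ₂ (p : ZMod q) * (p : ℂ) ^ (-δ)) ≠ 0 := sub_ne_zero.mpr hnd
  have hterm : ∀ m j : ℕ, fab χ₁ α β (p ^ j) * fab χ₂ γ δ (p ^ (m + j)) *
      (p : ℂ) ^ (-((j : ℂ) * (1 + s))) = Fgeo ((p : ℂ) ^ (-α)) (χ₁ (p : ZMod q) * (p : ℂ) ^ (-β)) j * Fgeo ((p : ℂ) ^ (-γ)) (χ₂ (p : ZMod q) * (p : ℂ) ^ (-δ)) (m + j) * ((p : ℂ) ^ (-(1 + s))) ^ j := by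
    intro m j
    rw [fab_eq χ₁ α β hp, fab_eq χ₂ γ δ hp,
      show -((j : ℂ) * (1 + s)) = (j : ℕ) * (-(1 + s)) by push_cast; ring,
      Complex.cpow_nat_mul]
  have hterm0 : ∀ j : ℕ, fab χ₁ α β (p ^ j) * fab χ₂ γ δ (p ^ j) *
      (p : ℂ) ^ (-((j : ℂ) * (1 + s))) = Fgeo ((p : ℂ) ^ (-α)) (χ₁ (p : ZMod q) * (p : ℂ) ^ (-β)) j * Fgeo ((p : ℂ) ^ (-γ)) (χ₂ (p : ZMod q) * (p : ℂ) ^ (-δ)) j * ((p : ℂ) ^ (-(1 + s))) ^ j := by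
    intro j
    have := hterm 0 j
    rwa [zero_add] at this
  have hsum : ∀ m : ℕ, Summable (fun j : ℕ => fab χ₁ α β (p ^ j) * fab χ₂ γ δ (p ^ (m + j)) *
      (p : ℂ) ^ (-((j : ℂ) * (1 + s)))) := fun m =>
    (core_summable h1 h2 h3 h4 huv m).congr fun j => (hterm m j).symm
  have hcs0 := core_summable h1 h2 h3 h4 huv 0
  simp only [zero_add] at hcs0
  have hsum0 : Summable (fun j : ℕ => fab χ₁ α β (p ^ j) * fab χ₂ γ δ (p ^ j) *
      (p : ℂ) ^ (-((j : ℂ) * (1 + s)))) := hcs0.congr fun j => (hterm0 j).symm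
  have htsum : ∀ m : ℕ, (∑' j : ℕ, fab χ₁ α β (p ^ j) * fab χ₂ γ δ (p ^ (m + j)) *
      (p : ℂ) ^ (-((j : ℂ) * (1 + s))))
        = (((p : ℂ) ^ (-γ)) - (χ₂ (p : ZMod q) * (p : ℂ) ^ (-δ)))⁻¹ * (((p : ℂ) ^ (-γ)) ^ (m + 1) * ((1 - ((p : ℂ) ^ (-α)) * (((p : ℂ) ^ (-γ)) * ((p : ℂ) ^ (-(1 + s)))))⁻¹ * (1 - (χ₁ (p : ZMod q) * (p : ℂ) ^ (-β)) * (((p : ℂ) ^ (-γ)) * ((p : ℂ) ^ (-(1 + s)))))⁻¹)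
            - (χ₂ (p : ZMod q) * (p : ℂ) ^ (-δ)) ^ (m + 1) * ((1 - ((p : ℂ) ^ (-α)) * ((χ₂ (p : ZMod q) * (p : ℂ) ^ (-δ)) * ((p : ℂ) ^ (-(1 + s)))))⁻¹ * (1 - (χ₁ (p : ZMod q) * (p : ℂ) ^ (-β)) * ((χ₂ (p : ZMod q) * (p : ℂ) ^ (-δ)) * ((p : ℂ) ^ (-(1 + s)))))⁻¹)) := fun m => by
    rw [tsum_congr (hterm m)]
    exact core_tsum h1 h2 h3 h4 huv m
  have hct0 := core_tsum h1 h2 h3 h4 huv 0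
  simp only [zero_add] at hct0
  have htsum0 : (∑' j : ℕ, fab χ₁ α β (p ^ j) * fab χ₂ γ δ (p ^ j) *
      (p : ℂ) ^ (-((j : ℂ) * (1 + s))))
        = (((p : ℂ) ^ (-γ)) - (χ₂ (p : ZMod q) * (p : ℂ) ^ (-δ)))⁻¹ * (((p : ℂ) ^ (-γ)) ^ 1 * ((1 - ((p : ℂ) ^ (-α)) * (((p : ℂ) ^ (-γ)) * ((p : ℂ) ^ (-(1 + s)))))⁻¹ * (1 - (χ₁ (p : ZMod q) * (p : ℂ) ^ (-β)) * (((p : ℂ) ^ (-γ)) * ((p : ℂ) ^ (-(1 + s)))))⁻¹)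
            - (χ₂ (p : ZMod q) * (p : ℂ) ^ (-δ)) ^ 1 * ((1 - ((p : ℂ) ^ (-α)) * ((χ₂ (p : ZMod q) * (p : ℂ) ^ (-δ)) * ((p : ℂ) ^ (-(1 + s)))))⁻¹ * (1 - (χ₁ (p : ZMod q) * (p : ℂ) ^ (-β)) * ((χ₂ (p : ZMod q) * (p : ℂ) ^ (-δ)) * ((p : ℂ) ^ (-(1 + s)))))⁻¹)) := by
    rw [tsum_congr hterm0]
    exact hct0
  have hdu : 1 - ((p : ℂ) ^ (-α)) * (((p : ℂ) ^ (-γ)) * ((p : ℂ) ^ (-(1 + s)))) ≠ 0 := one_sub_ne_zero_of_norm_lt_one h1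
  have hdu2 : 1 - (χ₁ (p : ZMod q) * (p : ℂ) ^ (-β)) * (((p : ℂ) ^ (-γ)) * ((p : ℂ) ^ (-(1 + s)))) ≠ 0 := one_sub_ne_zero_of_norm_lt_one h2
  have hdv : 1 - ((p : ℂ) ^ (-α)) * ((χ₂ (p : ZMod q) * (p : ℂ) ^ (-δ)) * ((p : ℂ) ^ (-(1 + s)))) ≠ 0 := one_sub_ne_zero_of_norm_lt_one h3
  have hdv2 : 1 - (χ₁ (p : ZMod q) * (p : ℂ) ^ (-β)) * ((χ₂ (p : ZMod q) * (p : ℂ) ^ (-δ)) * ((p : ℂ) ^ (-(1 + s)))) ≠ 0 := one_sub_ne_zero_of_norm_lt_one h4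
  have hcross : ‖((p : ℂ) ^ (-α)) * (((p : ℂ) ^ (-γ)) * ((p : ℂ) ^ (-(1 + s)))) * ((χ₁ (p : ZMod q) * (p : ℂ) ^ (-β)) * ((χ₂ (p : ZMod q) * (p : ℂ) ^ (-δ)) * ((p : ℂ) ^ (-(1 + s)))))‖ < 1 := by
    rw [norm_mul]
    calc ‖((p : ℂ) ^ (-α)) * (((p : ℂ) ^ (-γ)) * ((p : ℂ) ^ (-(1 + s))))‖ * ‖(χ₁ (p : ZMod q) * (p : ℂ) ^ (-β)) * ((χ₂ (p : ZMod q) * (p : ℂ) ^ (-δ)) * ((p : ℂ) ^ (-(1 + s))))‖ ≤ 1 * ‖(χ₁ (p : ZMod q) * (p : ℂ) ^ (-β)) * ((χ₂ (p : ZMod q) * (p : ℂ) ^ (-δ)) * ((p : ℂ) ^ (-(1 + s))))‖ :=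
          mul_le_mul_of_nonneg_right h1.le (norm_nonneg _)
      _ = ‖(χ₁ (p : ZMod q) * (p : ℂ) ^ (-β)) * ((χ₂ (p : ZMod q) * (p : ℂ) ^ (-δ)) * ((p : ℂ) ^ (-(1 + s))))‖ := one_mul _
      _ < 1 := h4
  have hXne : (1 : ℂ) - ((p : ℂ) ^ (-α)) * (((p : ℂ) ^ (-γ)) * ((p : ℂ) ^ (-(1 + s)))) * ((χ₁ (p : ZMod q) * (p : ℂ) ^ (-β)) * ((χ₂ (p : ZMod q) * (p : ℂ) ^ (-δ)) * ((p : ℂ) ^ (-(1 + s))))) ≠ 0 :=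
    one_sub_ne_zero_of_norm_lt_one hcross
  have hclosed0 : (((p : ℂ) ^ (-γ)) - (χ₂ (p : ZMod q) * (p : ℂ) ^ (-δ)))⁻¹ * (((p : ℂ) ^ (-γ)) ^ 1 * ((1 - ((p : ℂ) ^ (-α)) * (((p : ℂ) ^ (-γ)) * ((p : ℂ) ^ (-(1 + s)))))⁻¹ * (1 - (χ₁ (p : ZMod q) * (p : ℂ) ^ (-β)) * (((p : ℂ) ^ (-γ)) * ((p : ℂ) ^ (-(1 + s)))))⁻¹)
      - (χ₂ (p : ZMod q) * (p : ℂ) ^ (-δ)) ^ 1 * ((1 - ((p : ℂ) ^ (-α)) * ((χ₂ (p : ZMod q) * (p : ℂ) ^ (-δ)) * ((p : ℂ) ^ (-(1 + s)))))⁻¹ * (1 - (χ₁ (p : ZMod q) * (p : ℂ) ^ (-β)) * ((χ₂ (p : ZMod q) * (p : ℂ) ^ (-δ)) * ((p : ℂ) ^ (-(1 + s)))))⁻¹))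
        = (1 - ((p : ℂ) ^ (-α)) * (((p : ℂ) ^ (-γ)) * ((p : ℂ) ^ (-(1 + s)))) * ((χ₁ (p : ZMod q) * (p : ℂ) ^ (-β)) * ((χ₂ (p : ZMod q) * (p : ℂ) ^ (-δ)) * ((p : ℂ) ^ (-(1 + s)))))) *
          ((1 - ((p : ℂ) ^ (-α)) * (((p : ℂ) ^ (-γ)) * ((p : ℂ) ^ (-(1 + s)))))⁻¹ * ((1 - (χ₁ (p : ZMod q) * (p : ℂ) ^ (-β)) * (((p : ℂ) ^ (-γ)) * ((p : ℂ) ^ (-(1 + s)))))⁻¹ * ((1 - ((p : ℂ) ^ (-α)) * ((χ₂ (p : ZMod q) * (p : ℂ) ^ (-δ)) * ((p : ℂ) ^ (-(1 + s)))))⁻¹ *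
            (1 - (χ₁ (p : ZMod q) * (p : ℂ) ^ (-β)) * ((χ₂ (p : ZMod q) * (p : ℂ) ^ (-δ)) * ((p : ℂ) ^ (-(1 + s)))))⁻¹))) :=
    alg1 huv hdu hdu2 hdv hdv2 (by ring)
  have hne0 : (∑' j : ℕ, fab χ₁ α β (p ^ j) * fab χ₂ γ δ (p ^ j) *
      (p : ℂ) ^ (-((j : ℂ) * (1 + s)))) ≠ 0 := by
    rw [htsum0, hclosed0]
    exact mul_ne_zero hXne (mul_ne_zero (inv_ne_zero hdu) (mul_ne_zero (inv_ne_zero hdu2)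
      (mul_ne_zero (inv_ne_zero hdv) (inv_ne_zero hdv2))))
  refine ⟨hsum, hsum0, hne0, fun m => ?_⟩
  rw [htsum m, htsum0, hclosed0]
  have hden2 : (1 : ℂ) - χ₁ (p : ZMod q) * χ₂ (p : ZMod q) *
      (p : ℂ) ^ (-2 - α - β - γ - δ - 2 * s) ≠ 0 := by
    have hre : ((-2 : ℂ) - α - β - γ - δ - 2 * s).re < 0 := by
      have he : ((-2 : ℂ) - α - β - γ - δ - 2 * s).re
          = -2 - α.re - β.re - γ.re - δ.re - 2 * s.re := by
        simp [Complex.sub_re, Complex.mul_re]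
      rw [he]
      linarith [hα.1, hβ.1, hγ.1, hδ.1]
    exact one_sub_ne_zero_of_norm_lt_one (norm_mul_lt_one hc12 (normlt _ hre))
  have rT : (p : ℂ) ^ (-(1 + s)) = (p : ℂ)⁻¹ * (p : ℂ) ^ (-s) := by
    rw [show -(1 + s) = (-1 : ℂ) + -s by ring, Complex.cpow_add _ _ hP0, Complex.cpow_neg_one]
  have r1 : (p : ℂ) ^ (-γ * ((m : ℂ) + 1)) = ((p : ℂ) ^ (-γ)) ^ (m + 1) := by
    rw [show -γ * ((m : ℂ) + 1) = ((m + 1 : ℕ) : ℂ) * (-γ) by push_cast; ring,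
      Complex.cpow_nat_mul]
  have r2 : (p : ℂ) ^ (-δ * ((m : ℂ) + 1)) = ((p : ℂ) ^ (-δ)) ^ (m + 1) := by
    rw [show -δ * ((m : ℂ) + 1) = ((m + 1 : ℕ) : ℂ) * (-δ) by push_cast; ring,
      Complex.cpow_nat_mul]
  have r3 : (p : ℂ) ^ (-γ * (m : ℂ)) = ((p : ℂ) ^ (-γ)) ^ m := by
    rw [show -γ * (m : ℂ) = ((m : ℕ) : ℂ) * (-γ) by push_cast; ring, Complex.cpow_nat_mul]
  have r4 : (p : ℂ) ^ (-δ * (m : ℂ)) = ((p : ℂ) ^ (-δ)) ^ m := by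
    rw [show -δ * (m : ℂ) = ((m : ℕ) : ℂ) * (-δ) by push_cast; ring, Complex.cpow_nat_mul]
  have r5 : (p : ℂ) ^ (-γ - δ) = (p : ℂ) ^ (-γ) * (p : ℂ) ^ (-δ) := by
    rw [show -γ - δ = -γ + -δ by ring, Complex.cpow_add _ _ hP0]
  have r6 : (p : ℂ) ^ (-α - β - γ - δ) = (p : ℂ) ^ (-α) * ((p : ℂ) ^ (-β) * ((p : ℂ) ^ (-γ) * (p : ℂ) ^ (-δ))) := by
    rw [show -α - β - γ - δ = -α + (-β + (-γ + -δ)) by ring, Complex.cpow_add _ _ hP0,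
      Complex.cpow_add _ _ hP0, Complex.cpow_add _ _ hP0]
  have r7 : (p : ℂ) ^ (-δ - γ * (m : ℂ)) = (p : ℂ) ^ (-δ) * ((p : ℂ) ^ (-γ)) ^ m := by
    rw [show -δ - γ * (m : ℂ) = -δ + ((m : ℕ) : ℂ) * (-γ) by push_cast; ring,
      Complex.cpow_add _ _ hP0, Complex.cpow_nat_mul]
  have r8 : (p : ℂ) ^ (-γ - δ * (m : ℂ)) = (p : ℂ) ^ (-γ) * ((p : ℂ) ^ (-δ)) ^ m := by
    rw [show -γ - δ * (m : ℂ) = -γ + ((m : ℕ) : ℂ) * (-δ) by push_cast; ring,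
      Complex.cpow_add _ _ hP0, Complex.cpow_nat_mul]
  have r9 : (p : ℂ) ^ (-(2 * s)) = (p : ℂ) ^ (-s) * (p : ℂ) ^ (-s) := by
    rw [show -(2 * s) = -s + -s by ring, Complex.cpow_add _ _ hP0]
  have r10 : (p : ℂ) ^ (-2 - α - β - γ - δ - 2 * s)
      = (p : ℂ)⁻¹ * ((p : ℂ)⁻¹ * ((p : ℂ) ^ (-α) * ((p : ℂ) ^ (-β) * ((p : ℂ) ^ (-γ) *
          ((p : ℂ) ^ (-δ) * ((p : ℂ) ^ (-s) * (p : ℂ) ^ (-s))))))) := by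
    rw [show -2 - α - β - γ - δ - 2 * s
        = (-1 : ℂ) + ((-1 : ℂ) + (-α + (-β + (-γ + (-δ + (-s + -s)))))) by ring]
    simp only [Complex.cpow_add _ _ hP0, Complex.cpow_neg_one]
  have r12 : (p : ℂ) ^ (-2 : ℂ) = (p : ℂ)⁻¹ * (p : ℂ)⁻¹ := by
    rw [show (-2 : ℂ) = (-1 : ℂ) + (-1 : ℂ) by ring, Complex.cpow_add _ _ hP0,
      Complex.cpow_neg_one]
  rw [r10] at hden2
  rw [rT] at hdu hdu2 hdv hdv2 hXne ⊢
  rw [r1, r2, r3, r4, r5, r6, r7, r8, r9, r10, r12, Complex.cpow_neg_one]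
  set a : ℂ := (p : ℂ) ^ (-α) with ha
  set b : ℂ := (p : ℂ) ^ (-β) with hb
  set c : ℂ := (p : ℂ) ^ (-γ) with hc
  set d : ℂ := (p : ℂ) ^ (-δ) with hd
  set ee : ℂ := (p : ℂ) ^ (-s) with hee
  set Pi : ℂ := (p : ℂ)⁻¹ with hPi
  clear_value a b c d ee Pi
  rw [div_eq_div_iff (mul_ne_zero hXne (mul_ne_zero (inv_ne_zero hdu)
    (mul_ne_zero (inv_ne_zero hdu2) (mul_ne_zero (inv_ne_zero hdv) (inv_ne_zero hdv2)))))
    (mul_ne_zero huv hden2)]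
  generalize hD1 : 1 - a * (c * (Pi * ee)) = D1 at hdu ⊢
  generalize hD2 : 1 - χ₁ (p : ZMod q) * b * (c * (Pi * ee)) = D2 at hdu2 ⊢
  generalize hD3 : 1 - a * (χ₂ (p : ZMod q) * d * (Pi * ee)) = D3 at hdv ⊢
  generalize hD4 : 1 - χ₁ (p : ZMod q) * b * (χ₂ (p : ZMod q) * d * (Pi * ee)) = D4 at hdv2 ⊢
  generalize hD5 : c - χ₂ (p : ZMod q) * d = D5 at huv ⊢
  field_simp
  subst hD1 hD2 hD3 hD4 hD5
  ring

end Stmt15Main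

/-- explicit Euler-product formula for `B_{α,β,γ,δ,h}(s,χ̄)`
(Proposition 11 of the paper). -/
theorem statement_15 (q : ℕ) [NeZero q] (χ : DirichletCharacter ℂ q) (hχ : χ.IsPrimitive)
    (h : ℕ) (hh : 0 < h) (α β γ δ s : ℂ)
    (hα : |α.re| < 1 / 4) (hβ : |β.re| < 1 / 4) (hγ : |γ.re| < 1 / 4) (hδ : |δ.re| < 1 / 4)
    (hs : -(1 / 2 : ℝ) < s.re)
    (hnd : ∀ p : ℕ, p.Prime → p ∣ h →
      (p : ℂ) ^ (-γ) ≠ conjChar χ (p : ZMod q) * (p : ℂ) ^ (-δ)) :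
    (∀ p ∈ h.primeFactors,
      Summable (fun j : ℕ => fab χ α β (p ^ j) * fab (conjChar χ) γ δ (p ^ (h.factorization p + j)) *
        (p : ℂ) ^ (-((j : ℂ) * (1 + s)))) ∧
      Summable (fun j : ℕ => fab χ α β (p ^ j) * fab (conjChar χ) γ δ (p ^ j) *
        (p : ℂ) ^ (-((j : ℂ) * (1 + s)))) ∧
      (∑' j : ℕ, fab χ α β (p ^ j) * fab (conjChar χ) γ δ (p ^ j) *
        (p : ℂ) ^ (-((j : ℂ) * (1 + s)))) ≠ 0) ∧
    Bh χ (conjChar χ) α β γ δ h s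
      = ∏ p ∈ h.primeFactors,
          (let m : ℕ := h.factorization p
           (((p : ℂ) ^ (-γ * ((m : ℂ) + 1)) -
                conjChar χ (p : ZMod q) ^ (m + 1) * (p : ℂ) ^ (-δ * ((m : ℂ) + 1)))
            - (p : ℂ) ^ (-1 : ℂ) *
              (conjChar χ (p : ZMod q) * (p : ℂ) ^ (-γ - δ) *
                ((p : ℂ) ^ (-α) + χ (p : ZMod q) * (p : ℂ) ^ (-β)) *
                ((p : ℂ) ^ (-γ * (m : ℂ)) - conjChar χ (p : ZMod q) ^ m * (p : ℂ) ^ (-δ * (m : ℂ))) *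
                (p : ℂ) ^ (-s))
            + (p : ℂ) ^ (-2 : ℂ) *
              (χ (p : ZMod q) * conjChar χ (p : ZMod q) * (p : ℂ) ^ (-α - β - γ - δ) *
                (conjChar χ (p : ZMod q) * (p : ℂ) ^ (-δ - γ * (m : ℂ)) -
                  conjChar χ (p : ZMod q) ^ m * (p : ℂ) ^ (-γ - δ * (m : ℂ))) *
                (p : ℂ) ^ (-(2 * s)))) /
           (((p : ℂ) ^ (-γ) - conjChar χ (p : ZMod q) * (p : ℂ) ^ (-δ)) *
            (1 - χ (p : ZMod q) * conjChar χ (p : ZMod q) *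
              (p : ℂ) ^ (-2 - α - β - γ - δ - 2 * s)))) := by
  
  have hmain := fun (p : ℕ) (hp : p ∈ h.primeFactors) =>
    perprime χ (conjChar χ) α β γ δ s hα hβ hγ hδ hs (Nat.prime_of_mem_primeFactors hp)
      (hnd p (Nat.prime_of_mem_primeFactors hp) (Nat.dvd_of_mem_primeFactors hp))
  constructor
  · intro p hp
    exact ⟨(hmain p hp).1 (h.factorization p), (hmain p hp).2.1, (hmain p hp).2.2.1⟩
  · rw [Bh]
    exact Finset.prod_congr rfl fun p hp => (hmain p hp).2.2.2 (h.factorization p)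
end

section
/- Let χ be a primitive Dirichlet character mod q, let h, k be coprime positive integers, and let α, β, γ, δ be complex numbers with |Re α|, |Re β|, |Re γ|, |Re δ| < 1/4 such that χ̄(p) p^{−α−δ} ≠ 1 and χ̄(p) p^{β+γ} ≠ 1 for every prime p | h with p∤q, and χ(p) p^{−β−γ} ≠ 1 and χ(p) p^{α+δ} ≠ 1 for every prime p | k with p∤q. Then: (i) h^{α} k^{γ} C_{11,α,β,γ,δ,h,k}(0) = B_{−γ,β,−α,δ,h,k}(0); (ii) h^{β} k^{δ} C_{22,α,β,γ,δ,h,k}(0) = B_{α,−δ,γ,−β,h,k}(0). -/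
open Complex MeasureTheory Filter Topology

/-! ### Auxiliary development for statement_17 -/

namespace S17

open Complex Finset

noncomputable def Snm (X Y : ℂ) (j : ℕ) : ℂ := ∑ i ∈ Finset.range (j+1), X^(j-i) * Y^i

noncomputable def NumXY (X Y U V x : ℂ) (m : ℕ) : ℂ := ∑' j : ℕ, Snm X Y j * Snm U V (m+j) * x^j

lemma Snm_mul (X Y : ℂ) (j : ℕ) : Snm X Y j * (Y - X) = Y^(j+1) - X^(j+1) := by
  have h := geom_sum₂_mul Y X (j+1)
  rw [← h]
  congr 1
  unfold Snm
  refine Finset.sum_congr rfl fun i hi => ?_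
  rw [mul_comm]
  norm_num

lemma Snm_zero_right (X : ℂ) (j : ℕ) : Snm X 0 j = X^j := by
  unfold Snm
  rw [Finset.sum_eq_single_of_mem 0 (by simp)]
  · simp
  · intro i _ hi
    simp [zero_pow hi]

lemma one_sub_ne (r : ℂ) (hr : ‖r‖ < 1) : 1 - r ≠ 0 := by
  intro h
  have : r = 1 := by linear_combination -h
  rw [this] at hr
  simp at hr

lemma NumXY_mul (X Y U V x : ℂ) (m : ℕ)
    (h1 : ‖X*U*x‖ < 1) (h2 : ‖X*V*x‖ < 1) (h3 : ‖Y*U*x‖ < 1) (h4 : ‖Y*V*x‖ < 1) :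
    NumXY X Y U V x m * ((Y - X) * (V - U)) =
      Y*V^(m+1) * (1 - Y*V*x)⁻¹ - Y*U^(m+1) * (1 - Y*U*x)⁻¹
      - (X*V^(m+1) * (1 - X*V*x)⁻¹ - X*U^(m+1) * (1 - X*U*x)⁻¹) := by
  have key : ∀ j : ℕ, Snm X Y j * Snm U V (m+j) * x^j * ((Y - X) * (V - U)) =
      (Y*V^(m+1) * (Y*V*x)^j - Y*U^(m+1) * (Y*U*x)^j)
      - (X*V^(m+1) * (X*V*x)^j - X*U^(m+1) * (X*U*x)^j) := by
    intro j
    have e1 := Snm_mul X Y j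
    have e2 := Snm_mul U V (m+j)
    calc Snm X Y j * Snm U V (m+j) * x^j * ((Y - X) * (V - U))
        = (Snm X Y j * (Y - X)) * (Snm U V (m+j) * (V - U)) * x^j := by ring
      _ = (Y^(j+1) - X^(j+1)) * (V^(m+j+1) - U^(m+j+1)) * x^j := by rw [e1, e2]
      _ = _ := by ring
  have s1 : Summable (fun j : ℕ => Y*V^(m+1) * (Y*V*x)^j) :=
    (summable_geometric_of_norm_lt_one h4).mul_left _
  have s2 : Summable (fun j : ℕ => Y*U^(m+1) * (Y*U*x)^j) :=
    (summable_geometric_of_norm_lt_one h3).mul_left _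
  have s3 : Summable (fun j : ℕ => X*V^(m+1) * (X*V*x)^j) :=
    (summable_geometric_of_norm_lt_one h2).mul_left _
  have s4 : Summable (fun j : ℕ => X*U^(m+1) * (X*U*x)^j) :=
    (summable_geometric_of_norm_lt_one h1).mul_left _
  calc NumXY X Y U V x m * ((Y - X) * (V - U))
      = ∑' j : ℕ, Snm X Y j * Snm U V (m+j) * x^j * ((Y - X) * (V - U)) := tsum_mul_right.symm
    _ = ∑' j : ℕ, ((Y*V^(m+1) * (Y*V*x)^j - Y*U^(m+1) * (Y*U*x)^j)
        - (X*V^(m+1) * (X*V*x)^j - X*U^(m+1) * (X*U*x)^j)) := tsum_congr key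
    _ = _ := by
        rw [Summable.tsum_sub (s1.sub s2) (s3.sub s4), Summable.tsum_sub s1 s2, Summable.tsum_sub s3 s4,
          tsum_mul_left, tsum_mul_left, tsum_mul_left, tsum_mul_left,
          tsum_geometric_of_norm_lt_one h1, tsum_geometric_of_norm_lt_one h2,
          tsum_geometric_of_norm_lt_one h3, tsum_geometric_of_norm_lt_one h4]

lemma NumXY_degenerate (X U x : ℂ) (m : ℕ) (h1 : ‖X*U*x‖ < 1) :
    NumXY X 0 U 0 x m = U^m * (1 - X*U*x)⁻¹ := by
  unfold NumXY
  have key : ∀ j : ℕ, Snm X 0 j * Snm U 0 (m+j) * x^j = U^m * (X*U*x)^j := by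
    intro j
    rw [Snm_zero_right, Snm_zero_right]
    ring
  rw [tsum_congr key, tsum_mul_left, tsum_geometric_of_norm_lt_one h1]

set_option maxHeartbeats 2000000 in
lemma core_main (X Y U w x : ℂ) (m : ℕ) (hU : U ≠ 0)
    (h1 : ‖X*U*x‖ < 1) (h2 : ‖X*(U*w)*x‖ < 1) (h3 : ‖Y*U*x‖ < 1) (h4 : ‖Y*(U*w)*x‖ < 1)
    (hXY : X ≠ Y) (hw : w ≠ 1) :
    U^m * (((1 - w^(m+1))
        - x * ((X*(U*w) + Y*(U*w)) * (1 - w^m))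
        + x^2 * (X*Y*(U*w)^2 - w^m * (X*Y*U*(U*w))))
      / ((1 - w) * (1 - X*Y*U*(U*w)*x^2)))
    = NumXY X Y U (U*w) x m / NumXY X Y U (U*w) x 0 := by
  have e1 : (1:ℂ) - X*U*x ≠ 0 := one_sub_ne _ h1
  have e2 : (1:ℂ) - X*(U*w)*x ≠ 0 := one_sub_ne _ h2
  have e3 : (1:ℂ) - Y*U*x ≠ 0 := one_sub_ne _ h3
  have e4 : (1:ℂ) - Y*(U*w)*x ≠ 0 := one_sub_ne _ h4
  have hDn : ‖X*Y*U*(U*w)*x^2‖ < 1 := by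
    have hrw : X*Y*U*(U*w)*x^2 = (X*U*x) * (Y*(U*w)*x) := by ring
    rw [hrw, norm_mul]
    have n1 := norm_nonneg (X*U*x)
    have n2 := norm_nonneg (Y*(U*w)*x)
    nlinarith
  have eD : (1:ℂ) - X*Y*U*(U*w)*x^2 ≠ 0 := one_sub_ne _ hDn
  have hw' : (1:ℂ) - w ≠ 0 := fun hcon => hw (by linear_combination -hcon)
  have hYX : Y - X ≠ 0 := sub_ne_zero.mpr (Ne.symm hXY)
  have hVU : (U*w) - U ≠ 0 := by
    intro hcon
    have h0 : U * (w - 1) = 0 := by linear_combination hcon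
    rcases mul_eq_zero.mp h0 with h | h
    · exact hU h
    · exact hw (by linear_combination h)
  have hc : (Y - X) * ((U*w) - U) ≠ 0 := mul_ne_zero hYX hVU
  have hm := NumXY_mul X Y U (U*w) x m h1 h2 h3 h4
  have h0 := NumXY_mul X Y U (U*w) x 0 h1 h2 h3 h4
  have key0 : Y*(U*w)^(0+1) * (1 - Y*(U*w)*x)⁻¹ - Y*U^(0+1) * (1 - Y*U*x)⁻¹
      - (X*(U*w)^(0+1) * (1 - X*(U*w)*x)⁻¹ - X*U^(0+1) * (1 - X*U*x)⁻¹)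
      = (1 - X*Y*U*(U*w)*x^2) * ((1 - Y*(U*w)*x) * (1 - Y*U*x) * (1 - X*(U*w)*x) * (1 - X*U*x))⁻¹
        * ((Y - X) * ((U*w) - U)) := by
    simp only [zero_add, pow_one, ← div_eq_mul_inv]
    rw [div_sub_div _ _ e4 e3, div_sub_div _ _ e2 e1, div_sub_div _ _ (mul_ne_zero e4 e3) (mul_ne_zero e2 e1), div_mul_eq_mul_div, div_eq_div_iff (mul_ne_zero (mul_ne_zero e4 e3) (mul_ne_zero e2 e1)) (mul_ne_zero (mul_ne_zero (mul_ne_zero e4 e3) e2) e1)]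
    ring
  have hN0 : NumXY X Y U (U*w) x 0
      = (1 - X*Y*U*(U*w)*x^2) * ((1 - Y*(U*w)*x) * (1 - Y*U*x) * (1 - X*(U*w)*x) * (1 - X*U*x))⁻¹ := by
    rw [key0] at h0
    exact mul_right_cancel₀ hc h0
  have hN0ne : NumXY X Y U (U*w) x 0 ≠ 0 := by
    rw [hN0]
    exact mul_ne_zero eD (inv_ne_zero (by
      exact mul_ne_zero (mul_ne_zero (mul_ne_zero e4 e3) e2) e1))
  have hPi : (1 - Y*(U*w)*x) * (1 - Y*U*x) * (1 - X*(U*w)*x) * (1 - X*U*x) ≠ 0 :=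
    mul_ne_zero (mul_ne_zero (mul_ne_zero e4 e3) e2) e1
  have L : ∀ (nn d1 d2 pp cc uu : ℂ), d1 ≠ 0 → d2 ≠ 0 → pp ≠ 0 →
      uu * (nn/(d1*d2)) * (d2*pp⁻¹) * cc * (d1*pp) = uu*nn*cc := by
    intro nn d1 d2 pp cc uu hd1 hd2 hpp
    field_simp
  have R : ∀ (t1 t2 t3 t4 a1 a2 a3 a4 d1 : ℂ), a1 ≠ 0 → a2 ≠ 0 → a3 ≠ 0 → a4 ≠ 0 →
      (t1*a1⁻¹ - t2*a2⁻¹ - (t3*a3⁻¹ - t4*a4⁻¹)) * (d1*(a1*a2*a3*a4)) =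
      d1*(t1*(a2*a3*a4) - t2*(a1*a3*a4) - (t3*(a1*a2*a4) - t4*(a1*a2*a3))) := by
    intro t1 t2 t3 t4 a1 a2 a3 a4 d1 ha1 ha2 ha3 ha4
    field_simp
  rw [eq_div_iff hN0ne, hN0]
  refine mul_right_cancel₀ hc ?_
  rw [hm]
  refine mul_right_cancel₀ (mul_ne_zero hw' hPi) ?_
  rw [L _ _ _ _ _ _ hw' eD hPi,
    R _ _ _ _ _ _ _ _ _ e4 e3 e2 e1]
  simp only [pow_succ, mul_pow]
  ring


set_option maxHeartbeats 1000000 in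
lemma core_main22 (X Y U w x P Q : ℂ) (m : ℕ) (hU : U ≠ 0) (hPQ : P * Q = U)
    (h1 : ‖X*U*x‖ < 1) (h2 : ‖X*(U*w)*x‖ < 1) (h3 : ‖Y*U*x‖ < 1) (h4 : ‖Y*(U*w)*x‖ < 1)
    (hXY : X ≠ Y) (hw : w ≠ 1) :
    P^m * (((Q^m - (w*Q)^m * w)
        - x * ((Q^m - (w*Q)^m) * (Y*(U*w) + X*(U*w)))
        + x^2 * (Q^m * (X*Y*(U*w)^2) - (w*Q)^m * (X*Y*U*(U*w))))
      / ((1 - w) * (1 - X*Y*U*(U*w)*x^2)))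
    = NumXY X Y U (U*w) x m / NumXY X Y U (U*w) x 0 := by
  have key : P^m * ((Q^m - (w*Q)^m * w)
        - x * ((Q^m - (w*Q)^m) * (Y*(U*w) + X*(U*w)))
        + x^2 * (Q^m * (X*Y*(U*w)^2) - (w*Q)^m * (X*Y*U*(U*w))))
      = U^m * ((1 - w^(m+1))
        - x * ((X*(U*w) + Y*(U*w)) * (1 - w^m))
        + x^2 * (X*Y*(U*w)^2 - w^m * (X*Y*U*(U*w)))) := by
    rw [← hPQ]
    simp only [mul_pow, pow_succ]
    ring
  rw [← mul_div_assoc, key, mul_div_assoc]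
  exact core_main X Y U w x m hU h1 h2 h3 h4 hXY hw

lemma cpow_pp_ne_zero {p : ℕ} (hp : p ≠ 0) (e : ℂ) : (p:ℂ)^e ≠ 0 := by
  intro h
  rw [Complex.cpow_eq_zero_iff] at h
  exact Nat.cast_ne_zero.mpr hp h.1

lemma norm_cpow_pp {p : ℕ} (hp : 0 < p) (e : ℂ) : ‖(p:ℂ)^e‖ = (p:ℝ)^e.re :=
  Complex.norm_natCast_cpow_of_pos hp e

lemma norm_lt_aux {p : ℕ} (hp : 1 < p) (z1 z2 : ℂ) (h1 : ‖z1‖ = 1) (h2 : ‖z2‖ = 1)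
    (e1 e2 : ℂ) (he : e1.re + e2.re < 1) :
    ‖(z1 * (p:ℂ)^e1) * (z2 * (p:ℂ)^e2) * ((p:ℂ)^(-1:ℂ))‖ < 1 := by
  have hp0 : 0 < p := lt_trans one_pos hp
  have hpR : (0:ℝ) < (p:ℝ) := by exact_mod_cast hp0
  have hpR1 : (1:ℝ) < (p:ℝ) := by exact_mod_cast hp
  rw [norm_mul, norm_mul, norm_mul, norm_mul, h1, h2, one_mul, one_mul,
    norm_cpow_pp hp0, norm_cpow_pp hp0, norm_cpow_pp hp0,
    ← Real.rpow_add hpR, ← Real.rpow_add hpR]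
  have : e1.re + e2.re + (-1:ℂ).re < 0 := by
    simp only [Complex.neg_re, Complex.one_re]
    linarith
  exact Real.rpow_lt_one_of_one_lt_of_neg hpR1 this

lemma natpow_cpow (p k : ℕ) (e : ℂ) : (((p^k : ℕ)):ℂ)^e = ((p:ℂ)^e)^k := by
  push_cast
  rw [← Complex.natCast_cpow_natCast_mul, Complex.cpow_nat_mul]

lemma fab_pp {q : ℕ} (χ : DirichletCharacter ℂ q) (a b : ℂ) {p : ℕ} (hp : p.Prime) (j : ℕ) :
    fab χ a b (p^j) = Snm ((p:ℂ)^(-a)) (χ (p : ZMod q) * (p:ℂ)^(-b)) j := by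
  unfold fab Snm
  rw [Nat.sum_divisors_prime_pow hp]
  refine Finset.sum_congr rfl fun i hi => ?_
  have hij : i ≤ j := Nat.lt_succ_iff.mp (Finset.mem_range.mp hi)
  rw [Nat.pow_div hij hp.pos, natpow_cpow, natpow_cpow, Nat.cast_pow, map_pow]
  ring

lemma weight_eq (p : ℕ) (j : ℕ) : (p:ℂ)^(-(j:ℂ)) = ((p:ℂ)^(-1:ℂ))^j := by
  rw [show -(j:ℂ) = (j:ℂ)*(-1) by ring, Complex.cpow_nat_mul]

lemma Bfactor_eq {q : ℕ} (χ₁ χ₂ : DirichletCharacter ℂ q) (a b c d : ℂ) {p : ℕ}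
    (hp : p.Prime) (m : ℕ) :
    (∑' j : ℕ, fab χ₁ a b (p^j) * fab χ₂ c d (p^(m+j)) * (p:ℂ)^(-(j:ℂ))) =
    NumXY ((p:ℂ)^(-a)) (χ₁ (p:ZMod q) * (p:ℂ)^(-b)) ((p:ℂ)^(-c)) (χ₂ (p:ZMod q) * (p:ℂ)^(-d))
      ((p:ℂ)^(-1:ℂ)) m := by
  unfold NumXY
  refine tsum_congr fun j => ?_
  rw [fab_pp χ₁ a b hp, fab_pp χ₂ c d hp, weight_eq]

lemma Bfactor_eq0 {q : ℕ} (χ₁ χ₂ : DirichletCharacter ℂ q) (a b c d : ℂ) {p : ℕ}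
    (hp : p.Prime) :
    (∑' j : ℕ, fab χ₁ a b (p^j) * fab χ₂ c d (p^j) * (p:ℂ)^(-(j:ℂ))) =
    NumXY ((p:ℂ)^(-a)) (χ₁ (p:ZMod q) * (p:ℂ)^(-b)) ((p:ℂ)^(-c)) (χ₂ (p:ZMod q) * (p:ℂ)^(-d))
      ((p:ℂ)^(-1:ℂ)) 0 := by
  unfold NumXY
  refine tsum_congr fun j => ?_
  rw [Nat.zero_add, fab_pp χ₁ a b hp, fab_pp χ₂ c d hp, weight_eq]

set_option maxHeartbeats 1000000 in
lemma local11 {p : ℕ} (hp : p.Prime) (z zb a b c d : ℂ) (hz : z * zb = 1)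
    (hzn : ‖z‖ = 1) (hzbn : ‖zb‖ = 1)
    (ha : |a.re| < 1/4) (hb : |b.re| < 1/4) (hc : |c.re| < 1/4) (hd : |d.re| < 1/4)
    (m : ℕ) (hw : zb * (p:ℂ)^(-a-d) ≠ 1) (hxy : zb * (p:ℂ)^(b+c) ≠ 1) :
    ((p:ℂ)^a)^m *
      ((1 - zb^(m+1) * (p:ℂ)^(-(((m:ℂ)+1)*(a+d)))
        - (p:ℂ)^(-1:ℂ) * ((zb * (p:ℂ)^(c-d) + (p:ℂ)^(-b-d)) *
            (1 - zb^m * (p:ℂ)^(-((m:ℂ)*(a+d)))))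
        + (p:ℂ)^(-2:ℂ) * (zb * (p:ℂ)^(-b+c-2*d)
            - zb^m * (p:ℂ)^(-((m:ℂ)*(a+d))) * (p:ℂ)^(a-b+c-d))) /
       ((1 - zb * (p:ℂ)^(-a-d)) * (1 - (p:ℂ)^(-2+a-b+c-d))))
    = NumXY ((p:ℂ)^c) (z * (p:ℂ)^(-b)) ((p:ℂ)^a) (zb * (p:ℂ)^(-d)) ((p:ℂ)^(-1:ℂ)) m /
      NumXY ((p:ℂ)^c) (z * (p:ℂ)^(-b)) ((p:ℂ)^a) (zb * (p:ℂ)^(-d)) ((p:ℂ)^(-1:ℂ)) 0 := by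
  have hpc : (p:ℂ) ≠ 0 := Nat.cast_ne_zero.mpr hp.pos.ne'
  have hp1 : 1 < p := hp.one_lt
  obtain ⟨ha1, ha2⟩ := abs_lt.mp ha
  obtain ⟨hb1, hb2⟩ := abs_lt.mp hb
  obtain ⟨hc1, hc2⟩ := abs_lt.mp hc
  obtain ⟨hd1, hd2⟩ := abs_lt.mp hd
  have hUw : (p:ℂ)^a * (zb * (p:ℂ)^(-a-d)) = zb * (p:ℂ)^(-d) := by
    rw [mul_left_comm, ← Complex.cpow_add _ _ hpc, show a + (-a-d) = -d by ring]
  have n1 : ‖(p:ℂ)^c * (p:ℂ)^a * ((p:ℂ)^(-1:ℂ))‖ < 1 := by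
    have := norm_lt_aux hp1 1 1 norm_one norm_one c a (by linarith)
    simpa using this
  have n2 : ‖(p:ℂ)^c * ((p:ℂ)^a * (zb * (p:ℂ)^(-a-d))) * ((p:ℂ)^(-1:ℂ))‖ < 1 := by
    rw [hUw]
    have := norm_lt_aux hp1 1 zb norm_one hzbn c (-d)
      (by simp only [Complex.neg_re]; linarith)
    simpa using this
  have n3 : ‖z * (p:ℂ)^(-b) * (p:ℂ)^a * ((p:ℂ)^(-1:ℂ))‖ < 1 := by
    have := norm_lt_aux hp1 z 1 hzn norm_one (-b) a
      (by simp only [Complex.neg_re]; linarith)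
    simpa using this
  have n4 : ‖z * (p:ℂ)^(-b) * ((p:ℂ)^a * (zb * (p:ℂ)^(-a-d))) * ((p:ℂ)^(-1:ℂ))‖ < 1 := by
    rw [hUw]
    have := norm_lt_aux hp1 z zb hzn hzbn (-b) (-d)
      (by simp only [Complex.neg_re]; linarith)
    simpa using this
  have hXY : (p:ℂ)^c ≠ z * (p:ℂ)^(-b) := by
    intro hcon
    apply hxy
    calc zb * (p:ℂ)^(b+c) = zb * ((p:ℂ)^b * (p:ℂ)^c) := by rw [Complex.cpow_add _ _ hpc]
      _ = zb * ((p:ℂ)^b * (z * (p:ℂ)^(-b))) := by rw [hcon]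
      _ = (z*zb) * ((p:ℂ)^b * (p:ℂ)^(-b)) := by ring
      _ = (p:ℂ)^(b + -b) := by rw [hz, one_mul, ← Complex.cpow_add _ _ hpc]
      _ = 1 := by rw [show b + -b = (0:ℂ) by ring, Complex.cpow_zero]
  have hCM := core_main ((p:ℂ)^c) (z*(p:ℂ)^(-b)) ((p:ℂ)^a) (zb*(p:ℂ)^(-a-d)) ((p:ℂ)^(-1:ℂ)) m
      (cpow_pp_ne_zero hp.pos.ne' a) n1 n2 n3 n4 hXY hw
  rw [hUw] at hCM
  have em : ∀ n : ℕ, zb^n * (p:ℂ)^(-((n:ℂ)*(a+d))) = (zb*(p:ℂ)^(-a-d))^n := by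
    intro n
    rw [show -((n:ℂ)*(a+d)) = (n:ℂ)*(-a-d) by ring, Complex.cpow_nat_mul, ← mul_pow]
  have em1 : zb^(m+1) * (p:ℂ)^(-(((m:ℂ)+1)*(a+d))) = (zb*(p:ℂ)^(-a-d))^(m+1) := by
    rw [show -(((m:ℂ)+1)*(a+d)) = ((m+1:ℕ):ℂ)*(-a-d) by push_cast; ring,
      Complex.cpow_nat_mul, ← mul_pow]
  have eCD : zb * (p:ℂ)^(c-d) = (p:ℂ)^c * (zb * (p:ℂ)^(-d)) := by
    rw [show (c-d:ℂ) = c + -d by ring, Complex.cpow_add _ _ hpc]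
    ring
  have eBD : (p:ℂ)^(-b-d) = z * (p:ℂ)^(-b) * (zb * (p:ℂ)^(-d)) := by
    rw [show (-b-d:ℂ) = -b + -d by ring, Complex.cpow_add _ _ hpc]
    linear_combination (-((p:ℂ)^(-b)*(p:ℂ)^(-d))) * hz
  have eB2D : zb * (p:ℂ)^(-b+c-2*d) = (p:ℂ)^c * (z * (p:ℂ)^(-b)) * (zb * (p:ℂ)^(-d))^2 := by
    rw [show (-b+c-2*d:ℂ) = c + (-b + (-d + -d)) by ring, Complex.cpow_add _ _ hpc,
      Complex.cpow_add _ _ hpc, Complex.cpow_add _ _ hpc]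
    linear_combination (-(zb*(p:ℂ)^c*(p:ℂ)^(-b)*(p:ℂ)^(-d)*(p:ℂ)^(-d))) * hz
  have eABCD : (p:ℂ)^(a-b+c-d) = (p:ℂ)^c * (z * (p:ℂ)^(-b)) * (p:ℂ)^a * (zb * (p:ℂ)^(-d)) := by
    rw [show (a-b+c-d:ℂ) = c + (-b + (a + -d)) by ring, Complex.cpow_add _ _ hpc,
      Complex.cpow_add _ _ hpc, Complex.cpow_add _ _ hpc]
    linear_combination (-((p:ℂ)^c*(p:ℂ)^(-b)*(p:ℂ)^a*(p:ℂ)^(-d))) * hz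
  have eDen : (p:ℂ)^(-2+a-b+c-d)
      = (p:ℂ)^c * (z * (p:ℂ)^(-b)) * (p:ℂ)^a * (zb * (p:ℂ)^(-d)) * ((p:ℂ)^(-1:ℂ))^2 := by
    rw [show (-2+a-b+c-d:ℂ) = c + (-b + (a + (-d + (-1 + -1)))) by ring,
      Complex.cpow_add _ _ hpc, Complex.cpow_add _ _ hpc, Complex.cpow_add _ _ hpc,
      Complex.cpow_add _ _ hpc, Complex.cpow_add _ _ hpc]
    linear_combination (-((p:ℂ)^c*(p:ℂ)^(-b)*(p:ℂ)^a*(p:ℂ)^(-d)*((p:ℂ)^(-1:ℂ)*(p:ℂ)^(-1:ℂ)))) * hz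
  have eX2 : (p:ℂ)^(-2:ℂ) = ((p:ℂ)^(-1:ℂ))^2 := by
    rw [show (-2:ℂ) = -1 + -1 by norm_num, Complex.cpow_add _ _ hpc, sq]
  rw [em1, em m, eCD, eBD, eB2D, eABCD, eDen, eX2]
  exact hCM

set_option maxHeartbeats 1000000 in
lemma local22 {p : ℕ} (hp : p.Prime) (z zb a b c d : ℂ) (hz : z * zb = 1)
    (hzn : ‖z‖ = 1) (hzbn : ‖zb‖ = 1)
    (ha : |a.re| < 1/4) (hb : |b.re| < 1/4) (hc : |c.re| < 1/4) (hd : |d.re| < 1/4)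
    (m : ℕ) (hw : zb * (p:ℂ)^(b+c) ≠ 1) (hxy : zb * (p:ℂ)^(-a-d) ≠ 1) :
    ((p:ℂ)^b)^m *
      (((p:ℂ)^(-((m:ℂ)*(b+c))) - zb^(m+1) * (p:ℂ)^(b+c)
        - (p:ℂ)^(-1:ℂ) * (((p:ℂ)^(-((m:ℂ)*(b+c))) - zb^m) *
            ((p:ℂ)^(b+d) + zb * (p:ℂ)^(-a+b)))
        + (p:ℂ)^(-2:ℂ) * ((p:ℂ)^(-((m:ℂ)*(b+c))) * zb * (p:ℂ)^(-a+2*b+d)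
            - zb^m * (p:ℂ)^(-a+b-c+d))) /
       ((1 - zb * (p:ℂ)^(b+c)) * (1 - (p:ℂ)^(-2-a+b-c+d))))
    = NumXY ((p:ℂ)^(-a)) (z * (p:ℂ)^d) ((p:ℂ)^(-c)) (zb * (p:ℂ)^b) ((p:ℂ)^(-1:ℂ)) m /
      NumXY ((p:ℂ)^(-a)) (z * (p:ℂ)^d) ((p:ℂ)^(-c)) (zb * (p:ℂ)^b) ((p:ℂ)^(-1:ℂ)) 0 := by
  have hpc : (p:ℂ) ≠ 0 := Nat.cast_ne_zero.mpr hp.pos.ne'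
  have hp1 : 1 < p := hp.one_lt
  obtain ⟨ha1, ha2⟩ := abs_lt.mp ha
  obtain ⟨hb1, hb2⟩ := abs_lt.mp hb
  obtain ⟨hc1, hc2⟩ := abs_lt.mp hc
  obtain ⟨hd1, hd2⟩ := abs_lt.mp hd
  have hUw : (p:ℂ)^(-c) * (zb * (p:ℂ)^(b+c)) = zb * (p:ℂ)^b := by
    rw [mul_left_comm, ← Complex.cpow_add _ _ hpc, show -c + (b+c) = b by ring]
  have hPQ : (p:ℂ)^b * (p:ℂ)^(-b-c) = (p:ℂ)^(-c) := by
    rw [← Complex.cpow_add _ _ hpc, show b + (-b-c) = -c by ring]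
  have n1 : ‖(p:ℂ)^(-a) * (p:ℂ)^(-c) * ((p:ℂ)^(-1:ℂ))‖ < 1 := by
    have := norm_lt_aux hp1 1 1 norm_one norm_one (-a) (-c)
      (by simp only [Complex.neg_re]; linarith)
    simpa using this
  have n2 : ‖(p:ℂ)^(-a) * ((p:ℂ)^(-c) * (zb * (p:ℂ)^(b+c))) * ((p:ℂ)^(-1:ℂ))‖ < 1 := by
    rw [hUw]
    have := norm_lt_aux hp1 1 zb norm_one hzbn (-a) b
      (by simp only [Complex.neg_re]; linarith)
    simpa using this
  have n3 : ‖z * (p:ℂ)^d * (p:ℂ)^(-c) * ((p:ℂ)^(-1:ℂ))‖ < 1 := by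
    have := norm_lt_aux hp1 z 1 hzn norm_one d (-c)
      (by simp only [Complex.neg_re]; linarith)
    simpa using this
  have n4 : ‖z * (p:ℂ)^d * ((p:ℂ)^(-c) * (zb * (p:ℂ)^(b+c))) * ((p:ℂ)^(-1:ℂ))‖ < 1 := by
    rw [hUw]
    have := norm_lt_aux hp1 z zb hzn hzbn d b (by linarith)
    simpa using this
  have hXY : (p:ℂ)^(-a) ≠ z * (p:ℂ)^d := by
    intro hcon
    apply hxy
    calc zb * (p:ℂ)^(-a-d) = zb * ((p:ℂ)^(-a) * (p:ℂ)^(-d)) := by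
          rw [show (-a-d:ℂ) = -a + -d by ring, Complex.cpow_add _ _ hpc]
      _ = zb * ((z * (p:ℂ)^d) * (p:ℂ)^(-d)) := by rw [hcon]
      _ = (z*zb) * ((p:ℂ)^d * (p:ℂ)^(-d)) := by ring
      _ = (p:ℂ)^(d + -d) := by rw [hz, one_mul, ← Complex.cpow_add _ _ hpc]
      _ = 1 := by rw [show d + -d = (0:ℂ) by ring, Complex.cpow_zero]
  have hCM := core_main22 ((p:ℂ)^(-a)) (z*(p:ℂ)^d) ((p:ℂ)^(-c)) (zb*(p:ℂ)^(b+c))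
      ((p:ℂ)^(-1:ℂ)) ((p:ℂ)^b) ((p:ℂ)^(-b-c)) m
      (cpow_pp_ne_zero hp.pos.ne' (-c)) hPQ n1 n2 n3 n4 hXY hw
  rw [hUw] at hCM
  have e0 : (p:ℂ)^(-((m:ℂ)*(b+c))) = ((p:ℂ)^(-b-c))^m := by
    rw [show -((m:ℂ)*(b+c)) = (m:ℂ)*(-b-c) by ring, Complex.cpow_nat_mul]
  have hwQ : (zb*(p:ℂ)^(b+c)) * (p:ℂ)^(-b-c) = zb := by
    rw [mul_assoc, ← Complex.cpow_add _ _ hpc, show (b+c) + (-b-c) = (0:ℂ) by ring,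
      Complex.cpow_zero, mul_one]
  have e1 : zb^(m+1) * (p:ℂ)^(b+c) = ((zb*(p:ℂ)^(b+c))*(p:ℂ)^(-b-c))^m * (zb*(p:ℂ)^(b+c)) := by
    rw [hwQ, pow_succ]
    ring
  have ezbm : zb^m = ((zb*(p:ℂ)^(b+c))*(p:ℂ)^(-b-c))^m := by rw [hwQ]
  have eYV : (p:ℂ)^(b+d) = z * (p:ℂ)^d * (zb * (p:ℂ)^b) := by
    rw [show (b+d:ℂ) = d + b by ring, Complex.cpow_add _ _ hpc]
    linear_combination (-((p:ℂ)^d*(p:ℂ)^b)) * hz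
  have eXV : zb * (p:ℂ)^(-a+b) = (p:ℂ)^(-a) * (zb * (p:ℂ)^b) := by
    rw [show (-a+b:ℂ) = -a + b from rfl, Complex.cpow_add _ _ hpc]
    ring
  have eXYV2 : zb * (p:ℂ)^(-a+2*b+d) = (p:ℂ)^(-a) * (z * (p:ℂ)^d) * (zb * (p:ℂ)^b)^2 := by
    rw [show (-a+2*b+d:ℂ) = -a + (d + (b + b)) by ring, Complex.cpow_add _ _ hpc,
      Complex.cpow_add _ _ hpc, Complex.cpow_add _ _ hpc]
    linear_combination (-(zb*(p:ℂ)^(-a)*(p:ℂ)^d*(p:ℂ)^b*(p:ℂ)^b)) * hz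
  have eXYUV : (p:ℂ)^(-a+b-c+d)
      = (p:ℂ)^(-a) * (z * (p:ℂ)^d) * (p:ℂ)^(-c) * (zb * (p:ℂ)^b) := by
    rw [show (-a+b-c+d:ℂ) = -a + (d + (-c + b)) by ring, Complex.cpow_add _ _ hpc,
      Complex.cpow_add _ _ hpc, Complex.cpow_add _ _ hpc]
    linear_combination (-((p:ℂ)^(-a)*(p:ℂ)^d*(p:ℂ)^(-c)*(p:ℂ)^b)) * hz
  have eDen : (p:ℂ)^(-2-a+b-c+d)
      = (p:ℂ)^(-a) * (z * (p:ℂ)^d) * (p:ℂ)^(-c) * (zb * (p:ℂ)^b) * ((p:ℂ)^(-1:ℂ))^2 := by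
    rw [show (-2-a+b-c+d:ℂ) = -a + (d + (-c + (b + (-1 + -1)))) by ring,
      Complex.cpow_add _ _ hpc, Complex.cpow_add _ _ hpc, Complex.cpow_add _ _ hpc,
      Complex.cpow_add _ _ hpc, Complex.cpow_add _ _ hpc]
    linear_combination (-((p:ℂ)^(-a)*(p:ℂ)^d*(p:ℂ)^(-c)*(p:ℂ)^b*((p:ℂ)^(-1:ℂ)*(p:ℂ)^(-1:ℂ)))) * hz
  have eX2 : (p:ℂ)^(-2:ℂ) = ((p:ℂ)^(-1:ℂ))^2 := by
    rw [show (-2:ℂ) = -1 + -1 by norm_num, Complex.cpow_add _ _ hpc, sq]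
  rw [e0, e1, ezbm,
    mul_assoc (((p:ℂ)^(-b-c))^m) zb ((p:ℂ)^(-a+2*b+d)),
    eYV, eXV, eXYV2, eXYUV, eDen, eX2]
  exact hCM

lemma prod_cpow (s : Finset ℕ) (f : ℕ → ℕ) (e : ℂ) :
    ((∏ i ∈ s, i^(f i) : ℕ):ℂ)^e = ∏ i ∈ s, ((i:ℂ)^e)^(f i) := by
  induction s using Finset.cons_induction with
  | empty => simp
  | cons a s ha ih =>
    rw [Finset.prod_cons, Finset.prod_cons, Nat.cast_mul,
      Complex.natCast_mul_natCast_cpow, natpow_cpow, ih]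

lemma natCast_cpow_eq_prod (n : ℕ) (hn : n ≠ 0) (e : ℂ) :
    (n:ℂ)^e = ∏ p ∈ n.primeFactors, ((p:ℂ)^e)^(n.factorization p) := by
  conv_lhs => rw [← Nat.factorization_prod_pow_eq_self hn,
    Nat.prod_factorization_eq_prod_primeFactors]
  exact prod_cpow _ _ e

lemma qPart_cpow_eq_prod (q n : ℕ) (e : ℂ) :
    ((qPart q n : ℕ):ℂ)^e
      = ∏ p ∈ n.primeFactors, if p ∣ q then ((p:ℂ)^e)^(n.factorization p) else 1 := by
  unfold qPart
  rw [prod_cpow, Finset.prod_filter]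

lemma conjChar_apply {q : ℕ} (χ : DirichletCharacter ℂ q) (x : ZMod q) :
    conjChar χ x = (starRingEnd ℂ) (χ x) := rfl

lemma conjChar_conjChar {q : ℕ} (χ : DirichletCharacter ℂ q) :
    conjChar (conjChar χ) = χ := by
  ext x
  simp [conjChar_apply]

lemma unit_facts {q : ℕ} (χ : DirichletCharacter ℂ q) {p : ℕ} (hp : p.Prime) (hq : ¬ p ∣ q) :
    χ (p : ZMod q) * conjChar χ (p : ZMod q) = 1 ∧ ‖χ (p : ZMod q)‖ = 1 ∧
      ‖conjChar χ (p : ZMod q)‖ = 1 := by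
  have hu : IsUnit ((p:ℕ) : ZMod q) := (ZMod.isUnit_prime_iff_not_dvd hp).mpr hq
  have hn1 : ‖χ (p:ZMod q)‖ = 1 := by
    have := DirichletCharacter.unit_norm_eq_one χ hu.unit
    rwa [IsUnit.unit_spec] at this
  have hn2 : ‖conjChar χ (p:ZMod q)‖ = 1 := by
    rw [conjChar_apply]
    rwa [RCLike.norm_conj]
  refine ⟨?_, hn1, hn2⟩
  rw [conjChar_apply, Complex.mul_conj]
  have : Complex.normSq (χ (p:ZMod q)) = 1 := by
    rw [Complex.normSq_eq_norm_sq, hn1]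
    norm_num
  rw [this]
  norm_num

lemma char_zero_of_dvd {q : ℕ} (χ : DirichletCharacter ℂ q) {p : ℕ} (hp : p.Prime)
    (hq : p ∣ q) : χ (p : ZMod q) = 0 := by
  apply MulChar.map_nonunit
  rw [ZMod.isUnit_prime_iff_not_dvd hp]
  exact not_not_intro hq

lemma H1 {q : ℕ} (χ : DirichletCharacter ℂ q) (a b c d : ℂ)
    (ha : |a.re| < 1/4) (hb : |b.re| < 1/4) (hc : |c.re| < 1/4) (hd : |d.re| < 1/4)
    (n : ℕ) (hn : 0 < n)
    (hcond : ∀ p : ℕ, p.Prime → p ∣ n → ¬ p ∣ q →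
      conjChar χ (p : ZMod q) * (p:ℂ)^(-a-d) ≠ 1 ∧
      conjChar χ (p : ZMod q) * (p:ℂ)^(b+c) ≠ 1) :
    (n:ℂ)^a * C11h (conjChar χ) a b c d n 0 = Bh χ (conjChar χ) (-c) b (-a) d n 0 := by
  unfold C11h Bh
  simp only [mul_zero, add_zero, sub_zero, mul_one]
  rw [Finset.prod_filter, natCast_cpow_eq_prod n hn.ne' a, ← Finset.prod_mul_distrib]
  refine Finset.prod_congr rfl fun p hpmem => ?_
  have hp : p.Prime := Nat.prime_of_mem_primeFactors hpmem
  have hdvd : p ∣ n := Nat.dvd_of_mem_primeFactors hpmem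
  have hp1 : 1 < p := hp.one_lt
  obtain ⟨ha1, ha2⟩ := abs_lt.mp ha
  obtain ⟨hc1, hc2⟩ := abs_lt.mp hc
  rw [Bfactor_eq χ (conjChar χ) (-c) b (-a) d hp, Bfactor_eq0 χ (conjChar χ) (-c) b (-a) d hp]
  simp only [neg_neg]
  by_cases hq : p ∣ q
  · rw [if_neg (not_not_intro hq), char_zero_of_dvd χ hp hq, zero_mul]
    have hz2 : conjChar χ (p : ZMod q) = 0 := by
      rw [conjChar_apply, char_zero_of_dvd χ hp hq, map_zero]
    rw [hz2, zero_mul]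
    have nb : ‖(p:ℂ)^c * (p:ℂ)^a * ((p:ℂ)^(-1:ℂ))‖ < 1 := by
      have := norm_lt_aux hp1 1 1 norm_one norm_one c a (by linarith)
      simpa using this
    rw [NumXY_degenerate _ _ _ _ nb, NumXY_degenerate _ _ _ _ nb, mul_one, pow_zero, one_mul]
    exact (mul_div_cancel_right₀ _ (inv_ne_zero (one_sub_ne _ nb))).symm
  · rw [if_pos hq]
    obtain ⟨hz, hn1, hn2⟩ := unit_facts χ hp hq
    obtain ⟨hw, hxy⟩ := hcond p hp hdvd hq
    exact local11 hp (χ (p:ZMod q)) (conjChar χ (p:ZMod q)) a b c d hz hn1 hn2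
      ha hb hc hd (n.factorization p) hw hxy

lemma H2 {q : ℕ} (χ : DirichletCharacter ℂ q) (a b c d : ℂ)
    (ha : |a.re| < 1/4) (hb : |b.re| < 1/4) (hc : |c.re| < 1/4) (hd : |d.re| < 1/4)
    (n : ℕ) (hn : 0 < n)
    (hcond : ∀ p : ℕ, p.Prime → p ∣ n → ¬ p ∣ q →
      conjChar χ (p : ZMod q) * (p:ℂ)^(b+c) ≠ 1 ∧
      conjChar χ (p : ZMod q) * (p:ℂ)^(-a-d) ≠ 1) :
    (n:ℂ)^b * ((qPart q n : ℕ):ℂ)^(-b-c) * C22h (conjChar χ) a b c d n 0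
      = Bh χ (conjChar χ) a (-d) c (-b) n 0 := by
  unfold C22h Bh
  simp only [mul_zero, add_zero, sub_zero, mul_one]
  rw [Finset.prod_filter, natCast_cpow_eq_prod n hn.ne' b, qPart_cpow_eq_prod,
    ← Finset.prod_mul_distrib, ← Finset.prod_mul_distrib]
  refine Finset.prod_congr rfl fun p hpmem => ?_
  have hp : p.Prime := Nat.prime_of_mem_primeFactors hpmem
  have hdvd : p ∣ n := Nat.dvd_of_mem_primeFactors hpmem
  have hp1 : 1 < p := hp.one_lt
  have hpc : (p:ℂ) ≠ 0 := Nat.cast_ne_zero.mpr hp.pos.ne'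
  obtain ⟨ha1, ha2⟩ := abs_lt.mp ha
  obtain ⟨hc1, hc2⟩ := abs_lt.mp hc
  rw [Bfactor_eq χ (conjChar χ) a (-d) c (-b) hp, Bfactor_eq0 χ (conjChar χ) a (-d) c (-b) hp]
  simp only [neg_neg]
  by_cases hq : p ∣ q
  · rw [if_pos hq, if_neg (not_not_intro hq), mul_one, ← mul_pow,
      show (p:ℂ)^b * (p:ℂ)^(-b-c) = (p:ℂ)^(-c) by
        rw [← Complex.cpow_add _ _ hpc, show b + (-b-c) = -c by ring],
      char_zero_of_dvd χ hp hq, zero_mul]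
    have hz2 : conjChar χ (p : ZMod q) = 0 := by
      rw [conjChar_apply, char_zero_of_dvd χ hp hq, map_zero]
    rw [hz2, zero_mul]
    have nb : ‖(p:ℂ)^(-a) * (p:ℂ)^(-c) * ((p:ℂ)^(-1:ℂ))‖ < 1 := by
      have := norm_lt_aux hp1 1 1 norm_one norm_one (-a) (-c)
        (by simp only [Complex.neg_re]; linarith)
      simpa using this
    rw [NumXY_degenerate _ _ _ _ nb, NumXY_degenerate _ _ _ _ nb, pow_zero, one_mul]
    exact (mul_div_cancel_right₀ _ (inv_ne_zero (one_sub_ne _ nb))).symm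
  · rw [if_neg hq, if_pos hq, mul_one]
    obtain ⟨hz, hn1, hn2⟩ := unit_facts χ hp hq
    obtain ⟨hw, hxy⟩ := hcond p hp hdvd hq
    exact local22 hp (χ (p:ZMod q)) (conjChar χ (p:ZMod q)) a b c d hz hn1 hn2
      ha hb hc hd (n.factorization p) hw hxy

end S17

/-- relating `C₁₁`, `C₂₂` at `s = 0` to `B` (Lemma 8 of the paper). -/
theorem statement_17 (q : ℕ) [NeZero q] (χ : DirichletCharacter ℂ q) (hχ : χ.IsPrimitive)
    (h k : ℕ) (hh : 0 < h) (hk : 0 < k) (hhk : Nat.Coprime h k)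
    (α β γ δ : ℂ)
    (hα : |α.re| < 1 / 4) (hβ : |β.re| < 1 / 4) (hγ : |γ.re| < 1 / 4) (hδ : |δ.re| < 1 / 4)
    (h1 : ∀ p : ℕ, p.Prime → p ∣ h → ¬ p ∣ q →
      conjChar χ (p : ZMod q) * (p : ℂ) ^ (-α - δ) ≠ 1 ∧
      conjChar χ (p : ZMod q) * (p : ℂ) ^ (β + γ) ≠ 1)
    (h2 : ∀ p : ℕ, p.Prime → p ∣ k → ¬ p ∣ q →
      χ (p : ZMod q) * (p : ℂ) ^ (-β - γ) ≠ 1 ∧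
      χ (p : ZMod q) * (p : ℂ) ^ (α + δ) ≠ 1) :
    (h : ℂ) ^ α * (k : ℂ) ^ γ * C11full χ α β γ δ h k 0 = Bfull χ (-γ) β (-α) δ h k 0 ∧
    (h : ℂ) ^ β * (k : ℂ) ^ δ * C22full χ α β γ δ h k 0 = Bfull χ α (-δ) γ (-β) h k 0 := by
  constructor
  · have Hh := S17.H1 χ α β γ δ hα hβ hγ hδ h hh (fun p hp hpd hpq => h1 p hp hpd hpq)
    have Hk := S17.H1 (conjChar χ) γ δ α β hγ hδ hα hβ k hk (fun p hp hpd hpq => by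
      rw [S17.conjChar_conjChar, show (-γ-β : ℂ) = -β-γ by ring, show (δ+α : ℂ) = α+δ by ring]
      exact h2 p hp hpd hpq)
    rw [S17.conjChar_conjChar] at Hk
    unfold C11full Bfull
    calc (h:ℂ)^α * (k:ℂ)^γ * (C11h (conjChar χ) α β γ δ h 0 * C11h χ γ δ α β k 0)
        = ((h:ℂ)^α * C11h (conjChar χ) α β γ δ h 0) * ((k:ℂ)^γ * C11h χ γ δ α β k 0) := by
          ring
      _ = _ := by rw [Hh, Hk]
  · have Hh := S17.H2 χ α β γ δ hα hβ hγ hδ h hh (fun p hp hpd hpq =>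
      ⟨(h1 p hp hpd hpq).2, (h1 p hp hpd hpq).1⟩)
    have Hk := S17.H2 (conjChar χ) γ δ α β hγ hδ hα hβ k hk (fun p hp hpd hpq => by
      rw [S17.conjChar_conjChar, show (δ+α : ℂ) = α+δ by ring, show (-γ-β : ℂ) = -β-γ by ring]
      exact ⟨(h2 p hp hpd hpq).2, (h2 p hp hpd hpq).1⟩)
    rw [S17.conjChar_conjChar] at Hk
    unfold C22full Bfull
    simp only [mul_zero, sub_zero]
    rw [show (-α-δ : ℂ) = -δ-α by ring]
    calc (h:ℂ)^β * (k:ℂ)^δ * ((qPart q h : ℂ)^(-β-γ) * (qPart q k : ℂ)^(-δ-α) *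
          C22h (conjChar χ) α β γ δ h 0 * C22h χ γ δ α β k 0)
        = ((h:ℂ)^β * (qPart q h : ℂ)^(-β-γ) * C22h (conjChar χ) α β γ δ h 0) *
          ((k:ℂ)^δ * (qPart q k : ℂ)^(-δ-α) * C22h χ γ δ α β k 0) := by
          ring
      _ = _ := by rw [Hh, Hk]
end

section
/- Let χ be a primitive Dirichlet character mod q, let h be a positive integer, and let α, β, γ, δ be complex numbers with |Re α|, |Re β|, |Re γ|, |Re δ| < 1/4 such that χ̄(p) p^{γ−δ} ≠ 1 for every prime p | h with p∤q. Then h^{−γ} · C_{11,α,β,γ,δ,h}(−(α+γ)/2, χ̄) = B_{α,β,γ,δ,h}(−α−γ, χ̄). (This is the key local identity behind the cancellation of the residue terms R(−(α+γ)/2) and J^{(1)}_{α,γ} in the paper.) -/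
open Complex MeasureTheory Filter Topology

noncomputable section Statement18Aux

private lemma aux_one_sub_ne {x : ℂ} (hx : ‖x‖ < 1) : (1 : ℂ) - x ≠ 0 := by
  intro h
  have hx1 : x = 1 := by linear_combination -h
  rw [hx1] at hx
  norm_num at hx

private lemma aux_divdiv (A B C : ℂ) (hC : C ≠ 0) : A / C / (B / C) = A / B := by
  rw [div_div_eq_mul_div, div_mul_cancel₀ _ hC]

private lemma aux_key_cauchy (u v t : ℂ) (j : ℕ) :
    (∑ b ∈ Finset.range (j + 1), u ^ (j - b) * v ^ b) * t ^ j
      = ∑ k ∈ Finset.range (j + 1), (u * t) ^ k * (v * t) ^ (j - k) := by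
  rw [Finset.sum_mul, ← Finset.sum_range_reflect (fun k => (u * t) ^ k * (v * t) ^ (j - k)) (j + 1)]
  refine Finset.sum_congr rfl fun b hb => ?_
  have hb' : b ≤ j := Finset.mem_range_succ_iff.mp hb
  simp only [Nat.add_sub_cancel]
  rw [Nat.sub_sub_self hb', mul_pow, mul_pow]
  have ht : t ^ (j - b) * t ^ b = t ^ j := by rw [← pow_add, Nat.sub_add_cancel hb']
  rw [← ht]; ring

private lemma aux_summable_S (u v t : ℂ) (hu : ‖u * t‖ < 1) (hv : ‖v * t‖ < 1) :
    Summable fun j : ℕ => (∑ b ∈ Finset.range (j + 1), u ^ (j - b) * v ^ b) * t ^ j := by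
  have hf : Summable fun n : ℕ => ‖(u * t) ^ n‖ := by
    simp only [norm_pow]; exact summable_geometric_of_lt_one (norm_nonneg _) hu
  have hg : Summable fun n : ℕ => ‖(v * t) ^ n‖ := by
    simp only [norm_pow]; exact summable_geometric_of_lt_one (norm_nonneg _) hv
  exact ((summable_norm_sum_mul_range_of_summable_norm hf hg).of_norm).congr
    fun j => (aux_key_cauchy u v t j).symm

private lemma aux_tsum_S (u v t : ℂ) (hu : ‖u * t‖ < 1) (hv : ‖v * t‖ < 1) :
    ∑' j : ℕ, (∑ b ∈ Finset.range (j + 1), u ^ (j - b) * v ^ b) * t ^ j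
      = (1 - u * t)⁻¹ * (1 - v * t)⁻¹ := by
  have hf : Summable fun n : ℕ => ‖(u * t) ^ n‖ := by
    simp only [norm_pow]; exact summable_geometric_of_lt_one (norm_nonneg _) hu
  have hg : Summable fun n : ℕ => ‖(v * t) ^ n‖ := by
    simp only [norm_pow]; exact summable_geometric_of_lt_one (norm_nonneg _) hv
  rw [tsum_congr (aux_key_cauchy u v t), ← tsum_mul_tsum_eq_tsum_sum_range_of_summable_norm hf hg,
    tsum_geometric_of_norm_lt_one hu, tsum_geometric_of_norm_lt_one hv]

private lemma aux_geom_pair (w z : ℂ) (n : ℕ) :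
    (w - z) * ∑ e ∈ Finset.range (n + 1), w ^ (n - e) * z ^ e = w ^ (n + 1) - z ^ (n + 1) := by
  have h1 : ∑ e ∈ Finset.range (n + 1), w ^ (n - e) * z ^ e
      = ∑ i ∈ Finset.range (n + 1), w ^ i * z ^ (n + 1 - 1 - i) := by
    rw [← Finset.sum_range_reflect (fun i => w ^ i * z ^ (n + 1 - 1 - i)) (n + 1)]
    refine Finset.sum_congr rfl fun e he => ?_
    have he' : e ≤ n := Finset.mem_range_succ_iff.mp he
    simp only [Nat.add_sub_cancel]
    rw [Nat.sub_sub_self he']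
  rw [h1, mul_comm]
  exact geom_sum₂_mul w z (n + 1)

private lemma aux_tsum_main (u v w z X : ℂ) (m : ℕ)
    (h1 : ‖u * w * X‖ < 1) (h2 : ‖v * w * X‖ < 1)
    (h3 : ‖u * z * X‖ < 1) (h4 : ‖v * z * X‖ < 1) :
    (w - z) * ∑' j : ℕ, (∑ b ∈ Finset.range (j + 1), u ^ (j - b) * v ^ b) *
        (∑ e ∈ Finset.range (m + j + 1), w ^ (m + j - e) * z ^ e) * X ^ j
      = w ^ (m + 1) * ((1 - u * w * X)⁻¹ * (1 - v * w * X)⁻¹)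
        - z ^ (m + 1) * ((1 - u * z * X)⁻¹ * (1 - v * z * X)⁻¹) := by
  have hw1 : ‖u * (w * X)‖ < 1 := by rwa [← mul_assoc]
  have hw2 : ‖v * (w * X)‖ < 1 := by rwa [← mul_assoc]
  have hz1 : ‖u * (z * X)‖ < 1 := by rwa [← mul_assoc]
  have hz2 : ‖v * (z * X)‖ < 1 := by rwa [← mul_assoc]
  have hsw := aux_summable_S u v (w * X) hw1 hw2
  have hsz := aux_summable_S u v (z * X) hz1 hz2
  have key : ∀ j : ℕ, (w - z) * ((∑ b ∈ Finset.range (j + 1), u ^ (j - b) * v ^ b) *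
        (∑ e ∈ Finset.range (m + j + 1), w ^ (m + j - e) * z ^ e) * X ^ j)
      = w ^ (m + 1) * ((∑ b ∈ Finset.range (j + 1), u ^ (j - b) * v ^ b) * (w * X) ^ j)
        - z ^ (m + 1) * ((∑ b ∈ Finset.range (j + 1), u ^ (j - b) * v ^ b) * (z * X) ^ j) := by
    intro j
    have hg := aux_geom_pair w z (m + j)
    have e1 : w ^ (m + j + 1) * X ^ j = w ^ (m + 1) * (w * X) ^ j := by
      rw [mul_pow, show m + j + 1 = (m + 1) + j by omega, pow_add]; ring
    have e2 : z ^ (m + j + 1) * X ^ j = z ^ (m + 1) * (z * X) ^ j := by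
      rw [mul_pow, show m + j + 1 = (m + 1) + j by omega, pow_add]; ring
    linear_combination (∑ b ∈ Finset.range (j + 1), u ^ (j - b) * v ^ b) * X ^ j * hg
      + (∑ b ∈ Finset.range (j + 1), u ^ (j - b) * v ^ b) * e1
      - (∑ b ∈ Finset.range (j + 1), u ^ (j - b) * v ^ b) * e2
  rw [← tsum_mul_left, tsum_congr key, Summable.tsum_sub (hsw.mul_left _) (hsz.mul_left _),
    tsum_mul_left, tsum_mul_left, aux_tsum_S u v (w * X) hw1 hw2, aux_tsum_S u v (z * X) hz1 hz2]
  simp only [mul_assoc]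

private lemma aux_natCast_pow_cpow (p k : ℕ) (c : ℂ) :
    ((p ^ k : ℕ) : ℂ) ^ c = ((p : ℂ) ^ c) ^ k := by
  induction k with
  | zero => simp
  | succ k ih =>
    have cast1 : ((p ^ k : ℕ) : ℂ) = (((p ^ k : ℕ) : ℝ) : ℂ) := by norm_cast
    have cast2 : ((p : ℕ) : ℂ) = (((p : ℕ) : ℝ) : ℂ) := by norm_cast
    rw [pow_succ, Nat.cast_mul, cast1, cast2,
      mul_cpow_ofReal_nonneg (Nat.cast_nonneg _) (Nat.cast_nonneg _), ← cast1, ← cast2, ih,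
      pow_succ]

private lemma aux_natCast_prod_cpow {ι : Type*} (s : Finset ι) (f : ι → ℕ) (c : ℂ) :
    ((∏ i ∈ s, f i : ℕ) : ℂ) ^ c = ∏ i ∈ s, ((f i : ℕ) : ℂ) ^ c := by
  induction s using Finset.cons_induction with
  | empty => simp
  | cons i s hi ih =>
    have cast1 : ((f i : ℕ) : ℂ) = (((f i : ℕ) : ℝ) : ℂ) := by norm_cast
    have cast2 : ((∏ j ∈ s, f j : ℕ) : ℂ) = (((∏ j ∈ s, f j : ℕ) : ℝ) : ℂ) := by norm_cast
    rw [Finset.prod_cons, Finset.prod_cons, Nat.cast_mul, cast1, cast2,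
      mul_cpow_ofReal_nonneg (Nat.cast_nonneg _) (Nat.cast_nonneg _), ← cast1, ← cast2, ih]

private lemma aux_fab_prime_pow {q : ℕ} (χ₀ : DirichletCharacter ℂ q) (α₀ β₀ : ℂ)
    {p : ℕ} (hp : p.Prime) (j : ℕ) :
    fab χ₀ α₀ β₀ (p ^ j)
      = ∑ b ∈ Finset.range (j + 1),
          ((p : ℂ) ^ (-α₀)) ^ (j - b) * (χ₀ ((p : ℕ) : ZMod q) * (p : ℂ) ^ (-β₀)) ^ b := by
  unfold fab
  rw [Nat.sum_divisors_prime_pow hp]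
  refine Finset.sum_congr rfl fun b hb => ?_
  have hb' : b ≤ j := Finset.mem_range_succ_iff.mp hb
  rw [Nat.pow_div hb' hp.pos, aux_natCast_pow_cpow, aux_natCast_pow_cpow, Nat.cast_pow, map_pow,
    mul_pow]
  ring

private lemma aux_three_bound {rp : ℝ} (h1 : 1 < rp) {e1 e2 e3 : ℝ} {n1 n2 n3 : ℝ}
    (ha : n1 ≤ rp ^ e1) (hb : n2 ≤ rp ^ e2) (hc : n3 ≤ rp ^ e3)
    (ha0 : 0 ≤ n1) (hb0 : 0 ≤ n2) (hc0 : 0 ≤ n3) (hsum : e1 + e2 + e3 < 0) :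
    n1 * n2 * n3 < 1 := by
  have hp0 : (0 : ℝ) < rp := by linarith
  calc n1 * n2 * n3 ≤ rp ^ e1 * rp ^ e2 * rp ^ e3 := by
        apply mul_le_mul (mul_le_mul ha hb hb0 (Real.rpow_nonneg hp0.le _)) hc hc0
        positivity
    _ = rp ^ (e1 + e2 + e3) := by rw [← Real.rpow_add hp0, ← Real.rpow_add hp0]
    _ < 1 := Real.rpow_lt_one_of_one_lt_of_neg h1 hsum

end Statement18Aux

set_option maxHeartbeats 2000000 in
/-- the key local identity `h^{-γ} C_{11,h}(-(α+γ)/2) = B_h(-α-γ)`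
(Lemma 9 of the paper). -/
theorem statement_18 (q : ℕ) [NeZero q] (χ : DirichletCharacter ℂ q) (hχ : χ.IsPrimitive)
    (h : ℕ) (hh : 0 < h) (α β γ δ : ℂ)
    (hα : |α.re| < 1 / 4) (hβ : |β.re| < 1 / 4) (hγ : |γ.re| < 1 / 4) (hδ : |δ.re| < 1 / 4)
    (hnd : ∀ p : ℕ, p.Prime → p ∣ h → ¬ p ∣ q →
      conjChar χ (p : ZMod q) * (p : ℂ) ^ (γ - δ) ≠ 1) :
    (h : ℂ) ^ (-γ) * C11h (conjChar χ) α β γ δ h (-(α + γ) / 2)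
      = Bh χ (conjChar χ) α β γ δ h (-α - γ) := by
  classical
  have hfactor : h = ∏ p ∈ h.primeFactors, p ^ h.factorization p := by
    conv_lhs => rw [← Nat.factorization_prod_pow_eq_self hh.ne']
    rw [Nat.prod_factorization_eq_prod_primeFactors]
  have hcast : (h : ℂ) ^ (-γ)
      = ∏ p ∈ h.primeFactors, ((p : ℂ) ^ (-γ)) ^ (h.factorization p) := by
    conv_lhs => rw [hfactor]
    rw [aux_natCast_prod_cpow]
    exact Finset.prod_congr rfl fun p _ => aux_natCast_pow_cpow p _ (-γ)
  rw [hcast]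
  simp only [C11h, Bh]
  rw [Finset.prod_filter, ← Finset.prod_mul_distrib]
  refine Finset.prod_congr rfl fun p hp => ?_
  have hprime : p.Prime := Nat.prime_of_mem_primeFactors hp
  have hpdvd : p ∣ h := Nat.dvd_of_mem_primeFactors hp
  have hppos : 0 < p := hprime.pos
  have hp1R : (1 : ℝ) < (p : ℝ) := by exact_mod_cast hprime.one_lt
  set P : ℂ := ((p : ℕ) : ℂ) with hPdef
  set m : ℕ := h.factorization p with hmdef
  set c : ℂ := conjChar χ ((p : ℕ) : ZMod q) with hcdef
  set xp : ℂ := χ ((p : ℕ) : ZMod q) with hxpdef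
  have hP0 : P ≠ 0 := by rw [hPdef]; exact Nat.cast_ne_zero.mpr hppos.ne'
  have hnormP : ∀ e : ℂ, ‖P ^ e‖ = (p : ℝ) ^ e.re := fun e => by
    rw [hPdef]; exact Complex.norm_natCast_cpow_of_pos hppos e
  have hne : ∀ e : ℂ, P ^ e ≠ 0 := fun e => by
    simp [Complex.cpow_eq_zero_iff, hP0]
  have hadd : ∀ x y : ℂ, P ^ (x + y) = P ^ x * P ^ y := fun x y => Complex.cpow_add x y hP0
  set u : ℂ := P ^ (-α) with hudef
  set v : ℂ := xp * P ^ (-β) with hvdef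
  set w : ℂ := P ^ (-γ) with hwdef
  set z : ℂ := c * P ^ (-δ) with hzdef
  set X : ℂ := P ^ (-(1 + (-α - γ))) with hXdef
  obtain ⟨hα1, hα2⟩ := abs_lt.mp hα
  obtain ⟨hβ1, hβ2⟩ := abs_lt.mp hβ
  obtain ⟨hγ1, hγ2⟩ := abs_lt.mp hγ
  obtain ⟨hδ1, hδ2⟩ := abs_lt.mp hδ
  have hnu : ‖u‖ ≤ (p : ℝ) ^ (-α).re := by rw [hudef, hnormP]
  have hnw : ‖w‖ ≤ (p : ℝ) ^ (-γ).re := by rw [hwdef, hnormP]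
  have hnv : ‖v‖ ≤ (p : ℝ) ^ (-β).re := by
    rw [hvdef, norm_mul, hnormP]
    exact mul_le_of_le_one_left (Real.rpow_nonneg (Nat.cast_nonneg p) _) (χ.norm_le_one _)
  have hnz : ‖z‖ ≤ (p : ℝ) ^ (-δ).re := by
    rw [hzdef, norm_mul, hnormP]
    exact mul_le_of_le_one_left (Real.rpow_nonneg (Nat.cast_nonneg p) _)
      ((conjChar χ).norm_le_one _)
  have hnX : ‖X‖ ≤ (p : ℝ) ^ (-(1 + (-α - γ))).re := by rw [hXdef, hnormP]
  have hb1 : ‖u * w * X‖ < 1 := by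
    rw [norm_mul, norm_mul]
    exact aux_three_bound hp1R hnu hnw hnX (norm_nonneg _) (norm_nonneg _) (norm_nonneg _)
      (by simp; linarith)
  have hb2 : ‖v * w * X‖ < 1 := by
    rw [norm_mul, norm_mul]
    exact aux_three_bound hp1R hnv hnw hnX (norm_nonneg _) (norm_nonneg _) (norm_nonneg _)
      (by simp; linarith)
  have hb3 : ‖u * z * X‖ < 1 := by
    rw [norm_mul, norm_mul]
    exact aux_three_bound hp1R hnu hnz hnX (norm_nonneg _) (norm_nonneg _) (norm_nonneg _)
      (by simp; linarith)
  have hb4 : ‖v * z * X‖ < 1 := by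
    rw [norm_mul, norm_mul]
    exact aux_three_bound hp1R hnv hnz hnX (norm_nonneg _) (norm_nonneg _) (norm_nonneg _)
      (by simp; linarith)
  have h5 : (1 : ℂ) - u * w * X ≠ 0 := aux_one_sub_ne hb1
  have h6 : (1 : ℂ) - v * w * X ≠ 0 := aux_one_sub_ne hb2
  have h7 : (1 : ℂ) - u * z * X ≠ 0 := aux_one_sub_ne hb3
  have h8 : (1 : ℂ) - v * z * X ≠ 0 := aux_one_sub_ne hb4
  have honeZ : (1 : ℂ) - u * v * w * z * (X * X) ≠ 0 := by
    have hlt : ‖(u * w * X) * (v * z * X)‖ < 1 := by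
      rw [norm_mul]
      nlinarith [norm_nonneg (u * w * X), norm_nonneg (v * z * X)]
    have h' := aux_one_sub_ne hlt
    rw [show (u * w * X) * (v * z * X) = u * v * w * z * (X * X) by ring] at h'
    exact h'
  have hgd : P ^ (γ - δ) = P ^ γ * (P ^ δ)⁻¹ := by
    rw [show γ - δ = γ + -δ by ring, hadd, Complex.cpow_neg]
  have hwz : w - z ≠ 0 := by
    by_cases hpq : p ∣ q
    · have hunit : ¬ IsUnit ((p : ℕ) : ZMod q) :=
        fun hu => ((ZMod.isUnit_prime_iff_not_dvd hprime).mp hu) hpq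
      have hc0 : c = 0 := by rw [hcdef]; exact (conjChar χ).map_nonunit hunit
      rw [hzdef, hc0, zero_mul, sub_zero, hwdef]
      exact hne _
    · intro h0
      have h0' : w = z := sub_eq_zero.mp h0
      apply hnd p hprime hpdvd hpq
      rw [← hcdef, ← hPdef, hgd]
      rw [hwdef, hzdef, Complex.cpow_neg, Complex.cpow_neg] at h0'
      calc conjChar χ ((p : ℕ) : ZMod q) * (P ^ γ * (P ^ δ)⁻¹)
          = (c * (P ^ δ)⁻¹) * P ^ γ := by rw [← hcdef]; ring
        _ = (P ^ γ)⁻¹ * P ^ γ := by rw [← h0']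
        _ = 1 := inv_mul_cancel₀ (hne γ)
  have htermM : ∀ j : ℕ,
      fab χ α β (p ^ j) * fab (conjChar χ) γ δ (p ^ (m + j)) * P ^ (-((j : ℂ) * (1 + (-α - γ))))
        = (∑ b ∈ Finset.range (j + 1), u ^ (j - b) * v ^ b)
          * (∑ e ∈ Finset.range (m + j + 1), w ^ (m + j - e) * z ^ e) * X ^ j := by
    intro j
    rw [aux_fab_prime_pow χ α β hprime j, aux_fab_prime_pow (conjChar χ) γ δ hprime (m + j),
      show -((j : ℂ) * (1 + (-α - γ))) = (j : ℂ) * (-(1 + (-α - γ))) by ring,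
      Complex.cpow_nat_mul]
  have hterm0 : ∀ j : ℕ,
      fab χ α β (p ^ j) * fab (conjChar χ) γ δ (p ^ j) * P ^ (-((j : ℂ) * (1 + (-α - γ))))
        = (∑ b ∈ Finset.range (j + 1), u ^ (j - b) * v ^ b)
          * (∑ e ∈ Finset.range (0 + j + 1), w ^ (0 + j - e) * z ^ e) * X ^ j := by
    intro j
    simp only [Nat.zero_add]
    rw [aux_fab_prime_pow χ α β hprime j, aux_fab_prime_pow (conjChar χ) γ δ hprime j,
      show -((j : ℂ) * (1 + (-α - γ))) = (j : ℂ) * (-(1 + (-α - γ))) by ring,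
      Complex.cpow_nat_mul]
  have HM := aux_tsum_main u v w z X m hb1 hb2 hb3 hb4
  have H0 := aux_tsum_main u v w z X 0 hb1 hb2 hb3 hb4
  have hQne : (1 - u * w * X) * (1 - v * w * X) * ((1 - u * z * X) * (1 - v * z * X)) ≠ 0 :=
    mul_ne_zero (mul_ne_zero h5 h6) (mul_ne_zero h7 h8)
  have HMQ : (∑' j : ℕ, fab χ α β (p ^ j) * fab (conjChar χ) γ δ (p ^ (m + j))
        * P ^ (-((j : ℂ) * (1 + (-α - γ)))))
      = (w ^ (m + 1) * ((1 - u * z * X) * (1 - v * z * X))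
          - z ^ (m + 1) * ((1 - u * w * X) * (1 - v * w * X)))
        / ((w - z) * ((1 - u * w * X) * (1 - v * w * X) * ((1 - u * z * X) * (1 - v * z * X)))) := by
    rw [tsum_congr htermM, eq_div_iff (mul_ne_zero hwz hQne)]
    calc (∑' j : ℕ, ((∑ b ∈ Finset.range (j + 1), u ^ (j - b) * v ^ b) *
            ∑ e ∈ Finset.range (m + j + 1), w ^ (m + j - e) * z ^ e) * X ^ j)
          * ((w - z) * ((1 - u * w * X) * (1 - v * w * X) * ((1 - u * z * X) * (1 - v * z * X))))
        = ((w - z) * ∑' j : ℕ, ((∑ b ∈ Finset.range (j + 1), u ^ (j - b) * v ^ b) *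
            ∑ e ∈ Finset.range (m + j + 1), w ^ (m + j - e) * z ^ e) * X ^ j)
          * ((1 - u * w * X) * (1 - v * w * X) * ((1 - u * z * X) * (1 - v * z * X))) := by ring
      _ = (w ^ (m + 1) * ((1 - u * w * X)⁻¹ * (1 - v * w * X)⁻¹)
            - z ^ (m + 1) * ((1 - u * z * X)⁻¹ * (1 - v * z * X)⁻¹))
          * ((1 - u * w * X) * (1 - v * w * X) * ((1 - u * z * X) * (1 - v * z * X))) := by rw [HM]
      _ = w ^ (m + 1) * ((1 - u * z * X) * (1 - v * z * X))
            - z ^ (m + 1) * ((1 - u * w * X) * (1 - v * w * X)) := by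
          have i5 := mul_inv_cancel₀ h5
          have i6 := mul_inv_cancel₀ h6
          have i7 := mul_inv_cancel₀ h7
          have i8 := mul_inv_cancel₀ h8
          linear_combination w ^ (m + 1) * ((1 - u * z * X) * (1 - v * z * X)) *
              ((1 - v * w * X) * (1 - v * w * X)⁻¹ * i5 + i6)
            - z ^ (m + 1) * ((1 - u * w * X) * (1 - v * w * X)) *
              ((1 - v * z * X) * (1 - v * z * X)⁻¹ * i7 + i8)
  have H0Q : (∑' j : ℕ, fab χ α β (p ^ j) * fab (conjChar χ) γ δ (p ^ j)
        * P ^ (-((j : ℂ) * (1 + (-α - γ)))))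
      = (w ^ (0 + 1) * ((1 - u * z * X) * (1 - v * z * X))
          - z ^ (0 + 1) * ((1 - u * w * X) * (1 - v * w * X)))
        / ((w - z) * ((1 - u * w * X) * (1 - v * w * X) * ((1 - u * z * X) * (1 - v * z * X)))) := by
    rw [tsum_congr hterm0, eq_div_iff (mul_ne_zero hwz hQne)]
    calc (∑' j : ℕ, ((∑ b ∈ Finset.range (j + 1), u ^ (j - b) * v ^ b) *
            ∑ e ∈ Finset.range (0 + j + 1), w ^ (0 + j - e) * z ^ e) * X ^ j)
          * ((w - z) * ((1 - u * w * X) * (1 - v * w * X) * ((1 - u * z * X) * (1 - v * z * X))))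
        = ((w - z) * ∑' j : ℕ, ((∑ b ∈ Finset.range (j + 1), u ^ (j - b) * v ^ b) *
            ∑ e ∈ Finset.range (0 + j + 1), w ^ (0 + j - e) * z ^ e) * X ^ j)
          * ((1 - u * w * X) * (1 - v * w * X) * ((1 - u * z * X) * (1 - v * z * X))) := by ring
      _ = (w ^ (0 + 1) * ((1 - u * w * X)⁻¹ * (1 - v * w * X)⁻¹)
            - z ^ (0 + 1) * ((1 - u * z * X)⁻¹ * (1 - v * z * X)⁻¹))
          * ((1 - u * w * X) * (1 - v * w * X) * ((1 - u * z * X) * (1 - v * z * X))) := by rw [H0]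
      _ = w ^ (0 + 1) * ((1 - u * z * X) * (1 - v * z * X))
            - z ^ (0 + 1) * ((1 - u * w * X) * (1 - v * w * X)) := by
          have i5 := mul_inv_cancel₀ h5
          have i6 := mul_inv_cancel₀ h6
          have i7 := mul_inv_cancel₀ h7
          have i8 := mul_inv_cancel₀ h8
          linear_combination w ^ (0 + 1) * ((1 - u * z * X) * (1 - v * z * X)) *
              ((1 - v * w * X) * (1 - v * w * X)⁻¹ * i5 + i6)
            - z ^ (0 + 1) * ((1 - u * w * X) * (1 - v * w * X)) *
              ((1 - v * z * X) * (1 - v * z * X)⁻¹ * i7 + i8)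
  have hE0 : w ^ (0 + 1) * ((1 - u * z * X) * (1 - v * z * X))
      - z ^ (0 + 1) * ((1 - u * w * X) * (1 - v * w * X)) ≠ 0 := by
    have hfac : w ^ (0 + 1) * ((1 - u * z * X) * (1 - v * z * X))
        - z ^ (0 + 1) * ((1 - u * w * X) * (1 - v * w * X))
        = (w - z) * (1 - u * v * w * z * (X * X)) := by ring
    rw [hfac]
    exact mul_ne_zero hwz honeZ
  rw [HMQ, H0Q, aux_divdiv _ _ _ (mul_ne_zero hwz hQne)]
  by_cases hpq : p ∣ q
  · rw [if_neg (not_not_intro hpq)]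
    have hunit : ¬ IsUnit ((p : ℕ) : ZMod q) :=
      fun hu => ((ZMod.isUnit_prime_iff_not_dvd hprime).mp hu) hpq
    have hc0 : c = 0 := by rw [hcdef]; exact (conjChar χ).map_nonunit hunit
    have hxp0 : xp = 0 := by rw [hxpdef]; exact χ.map_nonunit hunit
    rw [eq_div_iff hE0]
    rw [hzdef, hvdef, hc0, hxp0]
    simp only [zero_mul, mul_zero, sub_zero, inv_one, mul_one, one_mul,
      zero_pow (Nat.succ_ne_zero m), zero_pow (Nat.succ_ne_zero 0)]
    ring
  · rw [if_pos hpq]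
    have hisu : IsUnit ((p : ℕ) : ZMod q) := (ZMod.isUnit_prime_iff_not_dvd hprime).mpr hpq
    have hconj_apply : c = (starRingEnd ℂ) (χ ((p : ℕ) : ZMod q)) := by
      rw [hcdef]; simp [conjChar, MulChar.ringHomComp_apply]
    have hnorm1 : ‖χ ((p : ℕ) : ZMod q)‖ = 1 := by
      rw [← IsUnit.unit_spec hisu]
      exact DirichletCharacter.unit_norm_eq_one χ hisu.unit
    have hxpc : xp * c = 1 := by
      rw [hxpdef, hconj_apply, Complex.mul_conj, Complex.normSq_eq_norm_sq, hnorm1]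
      norm_num
    have hc0' : c ≠ 0 := by
      intro h0; rw [h0, mul_zero] at hxpc; exact zero_ne_one hxpc
    have hzY : z = c * P ^ (γ - δ) * w := by
      rw [hzdef, hwdef, mul_assoc, ← hadd]
      congr 1
      ring
    have hx4 : c ^ (m + 1) * P ^ (-(((m : ℂ) + 1) * (α + δ + 2 * (-(α + γ) / 2))))
        = (c * P ^ (γ - δ)) ^ (m + 1) := by
      rw [show -(((m : ℂ) + 1) * (α + δ + 2 * (-(α + γ) / 2))) = (((m + 1 : ℕ)) : ℂ) * (γ - δ) by
          push_cast; ring,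
        Complex.cpow_nat_mul, mul_pow]
    have hx3 : c ^ m * P ^ (-((m : ℂ) * (α + δ + 2 * (-(α + γ) / 2))))
        = (c * P ^ (γ - δ)) ^ m := by
      rw [show -((m : ℂ) * (α + δ + 2 * (-(α + γ) / 2))) = ((m : ℕ) : ℂ) * (γ - δ) by ring,
        Complex.cpow_nat_mul, mul_pow]
    have hx1 : P ^ (-1 : ℂ) = u * w * X := by
      rw [hudef, hwdef, hXdef, ← hadd, ← hadd]
      congr 1
      ring
    have hx2 : P ^ (-1 : ℂ) * P ^ (-β - δ - 2 * (-(α + γ) / 2)) = v * z * X := by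
      rw [← hadd, show (-1 : ℂ) + (-β - δ - 2 * (-(α + γ) / 2))
          = -β + (-δ + -(1 + (-α - γ))) by ring, hadd, hadd, hvdef, hzdef, hXdef]
      linear_combination (-(P ^ (-β) * (P ^ (-δ) * P ^ (-(1 + (-α - γ)))))) * hxpc
    have hx6 : P ^ (-2 : ℂ) * P ^ (α - β + γ - δ) = u * v * w * z * (X * X) := by
      rw [← hadd, show (-2 : ℂ) + (α - β + γ - δ)
          = -α + (-β + (-γ + (-δ + (-(1 + (-α - γ)) + -(1 + (-α - γ)))))) by ring,
        hadd, hadd, hadd, hadd, hadd, hudef, hvdef, hwdef, hzdef, hXdef]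
      linear_combination (-(P ^ (-α) * (P ^ (-β) * (P ^ (-γ) *
        (P ^ (-δ) * (P ^ (-(1 + (-α - γ))) * P ^ (-(1 + (-α - γ))))))))) * hxpc
    have hx5 : P ^ (-2 : ℂ) * (c * P ^ (-β + γ - 2 * δ - 2 * (-(α + γ) / 2)))
        = c * P ^ (γ - δ) * (u * v * w * z * (X * X)) := by
      have e1 : P ^ (-2 : ℂ) * (c * P ^ (-β + γ - 2 * δ - 2 * (-(α + γ) / 2)))
          = c * (P ^ (-2 : ℂ) * P ^ (-β + γ - 2 * δ - 2 * (-(α + γ) / 2))) := by ring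
      rw [e1, ← hadd, show (-2 : ℂ) + (-β + γ - 2 * δ - 2 * (-(α + γ) / 2))
          = (γ - δ) + (-α + (-β + (-γ + (-δ + (-(1 + (-α - γ)) + -(1 + (-α - γ))))))) by ring,
        hadd, hadd, hadd, hadd, hadd, hadd, hudef, hvdef, hwdef, hzdef, hXdef]
      linear_combination (-(c * (P ^ (γ - δ) * (P ^ (-α) * (P ^ (-β) * (P ^ (-γ) *
        (P ^ (-δ) * (P ^ (-(1 + (-α - γ))) * P ^ (-(1 + (-α - γ))))))))))) * hxpc
    have hxG : P ^ (-α - δ - 2 * (-(α + γ) / 2)) = P ^ (γ - δ) := by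
      congr 1
      ring
    have hxH : P ^ (-2 + α - β + γ - δ) = u * v * w * z * (X * X) := by
      rw [show (-2 + α - β + γ - δ : ℂ)
          = -α + (-β + (-γ + (-δ + (-(1 + (-α - γ)) + -(1 + (-α - γ)))))) by ring,
        hadd, hadd, hadd, hadd, hadd, hudef, hvdef, hwdef, hzdef, hXdef]
      linear_combination (-(P ^ (-α) * (P ^ (-β) * (P ^ (-γ) *
        (P ^ (-δ) * (P ^ (-(1 + (-α - γ))) * P ^ (-(1 + (-α - γ))))))))) * hxpc
    have hT2 : P ^ (-1 : ℂ) * ((c * P ^ (γ - δ) + P ^ (-β - δ - 2 * (-(α + γ) / 2)))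
          * (1 - c ^ m * P ^ (-((m : ℂ) * (α + δ + 2 * (-(α + γ) / 2))))))
        = (u * w * X * (c * P ^ (γ - δ)) + v * z * X)
          * (1 - c ^ m * P ^ (-((m : ℂ) * (α + δ + 2 * (-(α + γ) / 2))))) := by
      linear_combination (1 - c ^ m * P ^ (-((m : ℂ) * (α + δ + 2 * (-(α + γ) / 2)))))
          * (c * P ^ (γ - δ)) * hx1
        + (1 - c ^ m * P ^ (-((m : ℂ) * (α + δ + 2 * (-(α + γ) / 2))))) * hx2
    have hT3 : P ^ (-2 : ℂ) * (c * P ^ (-β + γ - 2 * δ - 2 * (-(α + γ) / 2))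
          - c ^ m * P ^ (-((m : ℂ) * (α + δ + 2 * (-(α + γ) / 2)))) * P ^ (α - β + γ - δ))
        = c * P ^ (γ - δ) * (u * v * w * z * (X * X))
          - c ^ m * P ^ (-((m : ℂ) * (α + δ + 2 * (-(α + γ) / 2)))) * (u * v * w * z * (X * X)) := by
      linear_combination hx5
        - (c ^ m * P ^ (-((m : ℂ) * (α + δ + 2 * (-(α + γ) / 2))))) * hx6
    have hDne : (1 - c * P ^ (-α - δ - 2 * (-(α + γ) / 2))) * (1 - P ^ (-2 + α - β + γ - δ))
        ≠ 0 := by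
      apply mul_ne_zero
      · have hne1 := hnd p hprime hpdvd hpq
        rw [← hcdef, ← hPdef] at hne1
        rw [hxG]
        exact sub_ne_zero_of_ne (Ne.symm hne1)
      · apply aux_one_sub_ne
        rw [hnormP]
        apply Real.rpow_lt_one_of_one_lt_of_neg hp1R
        have hre : (-2 + α - β + γ - δ).re = -2 + α.re - β.re + γ.re - δ.re := by simp
        rw [hre]; linarith
    rw [← mul_div_assoc, div_eq_div_iff hDne hE0]
    rw [hx4, hT2, hT3, hx3, hxG, hxH, hzY]
    simp only [mul_pow]
    ring
end
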